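/- arXiv:1701.08952 — 4 statements merged into one kernel-verified Lean document; each statement's English description precedes it below -/
import Mathlib

section
/- Let Σ=(X,𝒰,φ) be a forward complete control system. The following statements are equivalent: (i) Σ is ISS; (ii) Σ is UAG, CEP and BRS; (iii) Σ is ULIM, ULS and BRS; (iv) Σ is ULIM and UGS. -/
/-!
ISS yields each of the other properties directly from the estimate `β(‖x‖, t) + γ(‖u‖)`.

Conversely, ULIM and BRS bound trajectories for all times: from inputs of size at most `C` every
trajectory returns, after at least one time unit and within a uniform time, to the ball of radius
`1 + γ(C)`, and BRS bounds the excursions in between. Adding smallness near the equilibrium (from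
ULS, or from UAG and CEP), the supremum of `‖φ(t, x, u)‖` over `max ‖x‖ ‖u‖ ≤ C` is finite and tends
to `0` with `C`, so it is majorised by a `K∞` function; this is UGS. Restarting at the time given by
ULIM, UGS turns ULIM into UAG. Finally UGS and UAG give ISS: for each radius `k + 1` the uniform
decay times are smoothed into a continuous nonincreasing envelope, the envelopes are interpolated
in the radius, and the minimum with the UGS bound is made strict by adding `r e^{-t}`.
-/

open Set Filter

/-- Class `K`: continuous, strictly increasing on `[0,∞)` and vanishing at `0`. -/
def ClassK (γ : ℝ → ℝ) : Prop :=
  ContinuousOn γ (Ici 0) ∧ StrictMonoOn γ (Ici 0) ∧ γ 0 = 0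

/-- Class `K∞`: class `K` and unbounded. -/
def ClassKinf (γ : ℝ → ℝ) : Prop :=
  ClassK γ ∧ ∀ c : ℝ, ∃ r : ℝ, 0 ≤ r ∧ c ≤ γ r

/-- The class `K∞ ∪ {0}`. -/
def ClassKinf0 (γ : ℝ → ℝ) : Prop :=
  ClassKinf γ ∨ ∀ r : ℝ, 0 ≤ r → γ r = 0

/-- The class `K ∪ {0}`. -/
def ClassK0 (γ : ℝ → ℝ) : Prop :=
  ClassK γ ∨ ∀ r : ℝ, 0 ≤ r → γ r = 0

/-- Class `L`: continuous, strictly decreasing on `[0,∞)` with limit `0` at infinity. -/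
def ClassL (γ : ℝ → ℝ) : Prop :=
  ContinuousOn γ (Ici 0) ∧ StrictAntiOn γ (Ici 0) ∧ Tendsto γ atTop (nhds 0)

/-- Class `KL`. -/
def ClassKL (β : ℝ → ℝ → ℝ) : Prop :=
  ContinuousOn (fun p : ℝ × ℝ => β p.1 p.2) ((Ici 0) ×ˢ (Ici 0)) ∧
  (∀ t : ℝ, 0 ≤ t → ClassK (fun r => β r t)) ∧
  ∀ r : ℝ, 0 < r → StrictAntiOn (β r) (Ici 0) ∧ Tendsto (β r) atTop (nhds 0)

/-- A forward complete control system `Σ = (X, 𝒰, φ)`: inputs are functions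
`u : ℝ₊ → U` (modelled as functions on `ℝ`, with only `t ≥ 0` relevant);
the set `inputs` of admissible inputs carries a norm `Unorm`, is shift invariant and
closed under concatenation; the transition map `phi` satisfies the identity property,
causality, continuity in time and the cocycle property. -/
structure ControlSystem (X U : Type*) [NormedAddCommGroup X] [NormedSpace ℝ X] [Zero U] where
  /-- the set of admissible input functions -/
  inputs : Set (ℝ → U)
  /-- the norm of the input space -/
  Unorm : (ℝ → U) → ℝ
  Unorm_nonneg : ∀ u, 0 ≤ Unorm u
  /-- the zero input is admissible -/
  zero_mem : (fun _ : ℝ => (0 : U)) ∈ inputs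
  Unorm_zero : Unorm (fun _ : ℝ => (0 : U)) = 0
  /-- the transition map `φ(t,x,u)` -/
  phi : ℝ → X → (ℝ → U) → X
  /-- axiom of shift invariance -/
  shift_mem : ∀ u ∈ inputs, ∀ τ : ℝ, 0 ≤ τ → (fun s => u (s + τ)) ∈ inputs
  shift_norm : ∀ u ∈ inputs, ∀ τ : ℝ, 0 ≤ τ → Unorm (fun s => u (s + τ)) ≤ Unorm u
  /-- axiom of concatenation -/
  concat_mem : ∀ u₁ ∈ inputs, ∀ u₂ ∈ inputs, ∀ t : ℝ, 0 < t →
    (fun s => if s ≤ t then u₁ s else u₂ (s - t)) ∈ inputs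
  /-- identity property -/
  identity : ∀ x u, phi 0 x u = x
  /-- causality -/
  causality : ∀ t : ℝ, 0 ≤ t → ∀ x : X, ∀ u ∈ inputs, ∀ v ∈ inputs,
    (∀ s ∈ Icc (0:ℝ) t, u s = v s) → phi t x u = phi t x v
  /-- continuity of trajectories -/
  cont : ∀ x : X, ∀ u ∈ inputs, ContinuousOn (fun t => phi t x u) (Ici 0)
  /-- cocycle property -/
  cocycle : ∀ t : ℝ, 0 ≤ t → ∀ h : ℝ, 0 ≤ h → ∀ x : X, ∀ u ∈ inputs,
    phi h (phi t x u) (fun s => u (s + t)) = phi (t + h) x u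

namespace ControlSystem

variable {X U : Type*} [NormedAddCommGroup X] [NormedSpace ℝ X] [Zero U]

/-- the zero input -/
def zeroIn : ℝ → U := fun _ => 0

/-- Input-to-state stability. -/
def ISS (S : ControlSystem X U) : Prop :=
  ∃ β γ, ClassKL β ∧ ClassK γ ∧
    ∀ x : X, ∀ u ∈ S.inputs, ∀ t : ℝ, 0 ≤ t →
      ‖S.phi t x u‖ ≤ β ‖x‖ t + γ (S.Unorm u)

/-- Uniform asymptotic gain property. -/
def UAG (S : ControlSystem X U) : Prop :=
  ∃ γ, ClassKinf0 γ ∧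
    ∀ ε : ℝ, 0 < ε → ∀ r : ℝ, 0 < r → ∃ τ : ℝ, 0 ≤ τ ∧
      ∀ u ∈ S.inputs, ∀ x : X, ‖x‖ < r → ∀ t : ℝ, τ ≤ t →
        ‖S.phi t x u‖ ≤ ε + γ (S.Unorm u)

/-- Continuity at the equilibrium: `0` is an equilibrium of the undisturbed system and
the flow is continuous at `(x,u) = (0,0)`, uniformly on compact time intervals. -/
def CEP (S : ControlSystem X U) : Prop :=
  (∀ t : ℝ, 0 ≤ t → S.phi t 0 zeroIn = 0) ∧
  ∀ ε : ℝ, 0 < ε → ∀ h : ℝ, 0 < h → ∃ δ : ℝ, 0 < δ ∧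
    ∀ t ∈ Icc (0:ℝ) h, ∀ x : X, ‖x‖ ≤ δ → ∀ u ∈ S.inputs, S.Unorm u ≤ δ →
      ‖S.phi t x u‖ ≤ ε

/-- Bounded reachability sets. -/
def BRS (S : ControlSystem X U) : Prop :=
  ∀ C : ℝ, 0 < C → ∀ τ : ℝ, 0 < τ → ∃ M : ℝ,
    ∀ x : X, ‖x‖ ≤ C → ∀ u ∈ S.inputs, S.Unorm u ≤ C → ∀ t ∈ Icc (0:ℝ) τ,
      ‖S.phi t x u‖ ≤ M

/-- Uniform limit property. -/
def ULIM (S : ControlSystem X U) : Prop :=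
  ∃ γ, ClassK0 γ ∧
    ∀ ε : ℝ, 0 < ε → ∀ r : ℝ, 0 < r → ∃ τ : ℝ, 0 ≤ τ ∧
      ∀ x : X, ‖x‖ ≤ r → ∀ u ∈ S.inputs, ∃ t ∈ Icc (0:ℝ) τ,
        ‖S.phi t x u‖ ≤ ε + γ (S.Unorm u)

/-- Uniform local stability. -/
def ULS (S : ControlSystem X U) : Prop :=
  ∃ σ γ, ClassKinf σ ∧ ClassKinf0 γ ∧ ∃ r : ℝ, 0 < r ∧
    ∀ t : ℝ, 0 ≤ t → ∀ x : X, ‖x‖ ≤ r → ∀ u ∈ S.inputs, S.Unorm u ≤ r →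
      ‖S.phi t x u‖ ≤ σ ‖x‖ + γ (S.Unorm u)

/-- Uniform global stability. -/
def UGS (S : ControlSystem X U) : Prop :=
  ∃ σ γ, ClassKinf σ ∧ ClassKinf0 γ ∧
    ∀ t : ℝ, 0 ≤ t → ∀ x : X, ∀ u ∈ S.inputs,
      ‖S.phi t x u‖ ≤ σ ‖x‖ + γ (S.Unorm u)

end ControlSystem

open Topology

namespace ClassK

variable {γ : ℝ → ℝ} (hγ : ClassK γ)
include hγ

lemma monotoneOn : MonotoneOn γ (Ici 0) := hγ.2.1.monotoneOn

lemma le_of_le {a b : ℝ} (ha : 0 ≤ a) (hab : a ≤ b) : γ a ≤ γ b :=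
  hγ.monotoneOn ha (ha.trans hab) hab

lemma nonneg {s : ℝ} (hs : 0 ≤ s) : 0 ≤ γ s := hγ.2.2 ▸ hγ.le_of_le le_rfl hs

lemma add {γ' : ℝ → ℝ} (hγ' : ClassK γ') : ClassK fun s => γ s + γ' s :=
  ⟨hγ.1.add hγ'.1, fun _ ha _ hb hab => add_lt_add (hγ.2.1 ha hb hab) (hγ'.2.1 ha hb hab),
    by simp [hγ.2.2, hγ'.2.2]⟩

lemma const_mul {c : ℝ} (hc : 0 < c) : ClassK fun s => c * γ s :=
  ⟨continuousOn_const.mul hγ.1, fun _ ha _ hb hab => mul_lt_mul_of_pos_left (hγ.2.1 ha hb hab) hc,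
    by simp [hγ.2.2]⟩

lemma map_add_le {a b : ℝ} (ha : 0 ≤ a) (hb : 0 ≤ b) : γ (a + b) ≤ γ (2 * a) + γ (2 * b) := by
  rcases le_total a b with hab | hab
  · linarith [hγ.le_of_le (by linarith) (by linarith : a + b ≤ 2 * b),
      hγ.nonneg (by linarith : 0 ≤ 2 * a)]
  · linarith [hγ.le_of_le (by linarith) (by linarith : a + b ≤ 2 * a),
      hγ.nonneg (by linarith : 0 ≤ 2 * b)]

lemma exists_pos_forall_le {ε : ℝ} (hε : 0 < ε) : ∃ δ > 0, ∀ s, 0 ≤ s → s ≤ δ → γ s ≤ ε := by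
  obtain ⟨δ, hδ, hsub⟩ := Metric.mem_nhdsWithin_iff.mp
    (hγ.1 0 self_mem_Ici (Iic_mem_nhds (hγ.2.2 ▸ hε)))
  refine ⟨δ / 2, half_pos hδ, fun s hs hsδ => hsub ⟨?_, hs⟩⟩
  rw [Metric.mem_ball, Real.dist_0_eq_abs, abs_of_nonneg hs]
  linarith

end ClassK

lemma ClassK.comp {σ γ : ℝ → ℝ} (hσ : ClassK σ) (hγ : ClassK γ) : ClassK fun s => σ (γ s) :=
  ⟨hσ.1.comp hγ.1 fun _ hs => hγ.nonneg hs,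
    fun _ ha _ hb hab => hσ.2.1 (hγ.nonneg ha) (hγ.nonneg hb) (hγ.2.1 ha hb hab),
    by simp [hγ.2.2, hσ.2.2]⟩

lemma ClassKinf.id : ClassKinf fun s => s :=
  ⟨⟨continuousOn_id, fun _ _ _ _ h => h, rfl⟩,
    fun c => ⟨max c 0, le_max_right _ _, le_max_left _ _⟩⟩

lemma ClassKinf0.classK0 {γ : ℝ → ℝ} (h : ClassKinf0 γ) : ClassK0 γ := h.imp And.left id

lemma ClassK0.exists_classKinf_ge {γ : ℝ → ℝ} (h : ClassK0 γ) :
    ∃ γ', ClassKinf γ' ∧ ∀ s, 0 ≤ s → γ s ≤ γ' s := by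
  rcases h with hK | hzero
  · refine ⟨fun s => γ s + s, ⟨hK.add ClassKinf.id.1, fun c => ⟨max c 0, le_max_right _ _, ?_⟩⟩,
      fun s hs => le_add_of_nonneg_right hs⟩
    linarith [hK.nonneg (le_max_right c 0), le_max_left c 0]
  · exact ⟨fun s => s, ClassKinf.id, fun s hs => (hzero s hs).trans_le hs⟩

lemma ClassK.exists_classKinf_ge {γ : ℝ → ℝ} (h : ClassK γ) :
    ∃ γ', ClassKinf γ' ∧ ∀ s, 0 ≤ s → γ s ≤ γ' s :=
  ClassK0.exists_classKinf_ge (Or.inl h)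

namespace ClassKL

variable {β : ℝ → ℝ → ℝ} (hβ : ClassKL β)
include hβ

lemma le_of_le_left {a b t : ℝ} (ht : 0 ≤ t) (ha : 0 ≤ a) (hab : a ≤ b) : β a t ≤ β b t :=
  (hβ.2.1 t ht).le_of_le ha hab

lemma le_of_le_right {r s t : ℝ} (hr : 0 ≤ r) (hs : 0 ≤ s) (hst : s ≤ t) : β r t ≤ β r s := by
  rcases hr.eq_or_lt with rfl | hr
  · exact ((hβ.2.1 t (hs.trans hst)).2.2).trans_le ((hβ.2.1 s hs).2.2).ge
  · exact (hβ.2.2 r hr).1.antitoneOn hs (hs.trans hst) hst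

lemma exists_forall_le {r ε : ℝ} (hr : 0 ≤ r) (hε : 0 < ε) :
    ∃ τ, 0 ≤ τ ∧ ∀ t, τ ≤ t → β r t ≤ ε := by
  rcases hr.eq_or_lt with rfl | hr
  · exact ⟨0, le_rfl, fun t ht => ((hβ.2.1 t ht).2.2).trans_le hε.le⟩
  · obtain ⟨a, ha⟩ := eventually_atTop.mp ((hβ.2.2 r hr).2.eventually (ge_mem_nhds hε))
    exact ⟨max a 0, le_max_right _ _, fun t ht => ha t ((le_max_left _ _).trans ht)⟩

end ClassKL

section KinfMajorant

open MeasureTheory intervalIntegral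

variable {m : ℝ → ℝ} (hm : MonotoneOn m (Ici 0))
include hm

lemma intervalIntegrable_comp_mul {r : ℝ} (hr : 0 ≤ r) :
    IntervalIntegrable (fun s => m (r * s)) volume 1 2 := by
  refine MonotoneOn.intervalIntegrable fun s hs s' hs' hss' => ?_
  rw [uIcc_of_le one_le_two] at hs hs'
  exact hm (mul_nonneg hr (by linarith [hs.1])) (mul_nonneg hr (by linarith [hs'.1]))
    (mul_le_mul_of_nonneg_left hss' hr)

lemma integral_comp_mul_mono {r r' : ℝ} (hr : 0 ≤ r) (hrr' : r ≤ r') :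
    ∫ s in (1:ℝ)..2, m (r * s) ≤ ∫ s in (1:ℝ)..2, m (r' * s) :=
  integral_mono_on one_le_two (intervalIntegrable_comp_mul hm hr)
    (intervalIntegrable_comp_mul hm (hr.trans hrr')) fun s hs =>
      hm (mul_nonneg hr (by linarith [hs.1])) (mul_nonneg (hr.trans hrr') (by linarith [hs.1]))
        (mul_le_mul_of_nonneg_right hrr' (by linarith [hs.1]))

lemma integral_comp_mul_mem_Icc {r : ℝ} (hr : 0 ≤ r) :
    ∫ s in (1:ℝ)..2, m (r * s) ∈ Icc (m r) (m (2 * r)) := by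
  have hconst : ∀ c : ℝ, ∫ _ in (1:ℝ)..2, c = c := fun c => by norm_num
  constructor
  · refine hconst (m r) ▸ integral_mono_on one_le_two intervalIntegrable_const
      (intervalIntegrable_comp_mul hm hr) fun s hs =>
        hm hr (mul_nonneg hr (by linarith [hs.1])) (le_mul_of_one_le_right hr hs.1)
  · refine hconst (m (2 * r)) ▸ integral_mono_on one_le_two (intervalIntegrable_comp_mul hm hr)
      intervalIntegrable_const fun s hs =>
        hm (mul_nonneg hr (by linarith [hs.1])) (show (0:ℝ) ≤ 2 * r by positivity)
          (by nlinarith [hs.2])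

-- Away from `0` the average is `r⁻¹ ∫_r^{2r} m`, and primitives of monotone functions are
-- continuous.
lemma continuousAt_integral_comp_mul {r₀ : ℝ} (hr₀ : 0 < r₀) :
    ContinuousAt (fun r => ∫ s in (1:ℝ)..2, m (r * s)) r₀ := by
  set P : ℝ → ℝ := fun y => ∫ x in (0:ℝ)..y, m x
  have hint : ∀ a b, 0 ≤ a → 0 ≤ b → IntervalIntegrable m volume a b := fun a b ha hb =>
    (hm.mono fun x hx => le_trans (le_min ha hb) hx.1).intervalIntegrable
  have hP : ContinuousOn P (Icc 0 (3 * r₀)) := by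
    simpa only [uIcc_of_le (by linarith : (0:ℝ) ≤ 3 * r₀)] using
      continuousOn_primitive_interval' (hint 0 (3 * r₀) le_rfl (by linarith)) left_mem_uIcc
  have hPat : ∀ y ∈ Ioo 0 (3 * r₀), ContinuousAt P y :=
    fun y hy => hP.continuousAt (Icc_mem_nhds hy.1 hy.2)
  have heq : (fun r => r⁻¹ * (P (r * 2) - P (r * 1))) =ᶠ[𝓝 r₀]
      fun r => ∫ s in (1:ℝ)..2, m (r * s) := by
    filter_upwards [Ioi_mem_nhds hr₀] with r (hr0 : 0 < r)
    rw [integral_comp_mul_left _ hr0.ne', smul_eq_mul, integral_interval_sub_left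
      (hint _ _ le_rfl (by positivity)) (hint _ _ le_rfl (by positivity))]
  refine ContinuousAt.congr ?_ heq
  refine (continuousAt_inv₀ hr₀.ne').mul (((hPat _ ⟨?_, ?_⟩).comp
    (continuous_mul_const 2).continuousAt).sub ((hPat _ ⟨?_, ?_⟩).comp
    (continuous_mul_const 1).continuousAt)) <;> linarith

lemma tendsto_integral_comp_mul (hm0 : Tendsto m (𝓝[≥] 0) (𝓝 0)) :
    Tendsto (fun r => ∫ s in (1:ℝ)..2, m (r * s)) (𝓝[≥] 0) (𝓝 0) := by
  have h2 : Tendsto (fun r : ℝ => 2 * r) (𝓝[≥] 0) (𝓝[≥] 0) := by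
    have := (continuous_const_mul (2:ℝ)).continuousWithinAt (s := Ici 0) (x := 0)
    simpa using this.tendsto_nhdsWithin (t := Ici 0) fun r (hr : 0 ≤ r) =>
      (show (0:ℝ) ≤ 2 * r by positivity)
  exact tendsto_of_tendsto_of_tendsto_of_le_of_le' hm0 (hm0.comp h2)
    (eventually_nhdsWithin_of_forall fun r hr => (integral_comp_mul_mem_Icc hm hr).1)
    (eventually_nhdsWithin_of_forall fun r hr => (integral_comp_mul_mem_Icc hm hr).2)

-- The majorant: `r` plus the average of `m` over `[r, 2 r]`.
theorem exists_classKinf_ge (hm0 : Tendsto m (𝓝[≥] 0) (𝓝 0)) :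
    ∃ σ, ClassKinf σ ∧ ∀ r, 0 ≤ r → m r ≤ σ r := by
  have m_zero : m 0 = 0 :=
    tendsto_nhds_unique (tendsto_pure_nhds m 0) (hm0.mono_left (pure_le_nhdsWithin self_mem_Ici))
  have hlow : ∀ r, 0 ≤ r → r ≤ r + ∫ s in (1:ℝ)..2, m (r * s) := fun r hr => by
    linarith [(integral_comp_mul_mem_Icc hm hr).1, m_zero ▸ hm self_mem_Ici hr hr]
  refine ⟨fun r => r + ∫ s in (1:ℝ)..2, m (r * s), ⟨⟨fun r hr => ?_, fun r hr r' _ hrr' =>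
    add_lt_add_of_lt_of_le hrr' (integral_comp_mul_mono hm hr hrr'.le), by simp [m_zero]⟩,
    fun c => ⟨max c 0, le_max_right _ _, (le_max_left _ _).trans (hlow _ (le_max_right _ _))⟩⟩,
    fun r hr => by linarith [(integral_comp_mul_mem_Icc hm hr).1]⟩
  rcases (mem_Ici.mp hr).eq_or_lt with rfl | hr
  · simpa [ContinuousWithinAt, m_zero] using
      (tendsto_nhdsWithin_of_tendsto_nhds tendsto_id).add (tendsto_integral_comp_mul hm hm0)
  · exact (continuousAt_id.add (continuousAt_integral_comp_mul hm hr)).continuousWithinAt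

end KinfMajorant

theorem exists_classKinf_bound {ι : Type*} (ρ : ι → ℝ) (hρ : ∀ i, 0 ≤ ρ i) (F : ι → ℝ)
    (hbdd : ∀ C > 0, ∃ M, ∀ i, ρ i ≤ C → F i ≤ M)
    (hsmall : ∀ ε > 0, ∃ δ > 0, ∀ i, ρ i ≤ δ → F i ≤ ε) :
    ∃ σ, ClassKinf σ ∧ ∀ i, F i ≤ σ (ρ i) := by
  set A : ℝ → Set ℝ := fun C => insert 0 (F '' {i | ρ i ≤ C})
  have hA : ∀ C, BddAbove (A C) := by
    intro C
    obtain ⟨M, hM⟩ := hbdd (max C 1) (by positivity)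
    refine ⟨max M 0, ?_⟩
    rintro _ (rfl | ⟨i, hi, rfl⟩)
    · exact le_max_right _ _
    · exact (hM i (hi.trans (le_max_left _ _))).trans (le_max_left _ _)
  have hmono : Monotone fun C => sSup (A C) := fun C C' h =>
    csSup_le_csSup (hA C') (insert_nonempty _ _)
      (insert_subset_insert (image_mono fun i (hi : ρ i ≤ C) => hi.trans h))
  have hlim : Tendsto (fun C => sSup (A C)) (𝓝[≥] 0) (𝓝 0) := by
    refine tendsto_order.2 ⟨fun a ha => Eventually.of_forall fun C =>
      ha.trans_le (le_csSup (hA C) (mem_insert _ _)), fun a ha => ?_⟩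
    obtain ⟨δ, hδ, hFδ⟩ := hsmall (a / 2) (half_pos ha)
    filter_upwards [Icc_mem_nhdsGE hδ] with C hC
    refine (csSup_le (insert_nonempty _ _) ?_).trans_lt (half_lt_self ha)
    rintro _ (rfl | ⟨i, hi, rfl⟩)
    · exact (half_pos ha).le
    · exact hFδ i (le_trans hi hC.2)
  obtain ⟨σ, hσ, hle⟩ := exists_classKinf_ge (hmono.monotoneOn _) hlim
  exact ⟨σ, hσ, fun i =>
    (le_csSup (hA _) (mem_insert_of_mem _ ⟨i, le_refl (ρ i), rfl⟩)).trans (hle _ (hρ i))⟩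

def ramp (s : ℝ) : ℝ := max 0 (min 1 s)

lemma ramp_nonneg (s : ℝ) : 0 ≤ ramp s := le_max_left _ _

lemma ramp_le_one (s : ℝ) : ramp s ≤ 1 := max_le zero_le_one (min_le_left _ _)

lemma monotone_ramp : Monotone ramp := fun _ _ h => max_le_max le_rfl (min_le_min le_rfl h)

lemma continuous_ramp : Continuous ramp := continuous_const.max (continuous_const.min continuous_id)

lemma ramp_of_one_le {s : ℝ} (h : 1 ≤ s) : ramp s = 1 := by simp [ramp, h]

lemma ramp_of_nonpos {s : ℝ} (h : s ≤ 0) : ramp s = 0 := by simp [ramp, h]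

structure IsDecayProfile (g : ℝ → ℝ) : Prop where
  continuous : Continuous g
  antitone : Antitone g
  tendsto : Tendsto g atTop (𝓝 0)
  nonneg : ∀ t, 0 ≤ g t

-- `ramp (T n - t)` equals `1` for `t ≤ T n - 1` and `0` for `t ≥ T n`.
noncomputable def rampSum (b T : ℕ → ℝ) (t : ℝ) : ℝ := ∑' n, b n * ramp (T n - t)

section rampSum

variable {b : ℕ → ℝ} (T : ℕ → ℝ) (hb : ∀ n, 0 ≤ b n) (hsum : Summable b)
include hb hsum

lemma summable_rampSum (t : ℝ) : Summable fun n => b n * ramp (T n - t) :=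
  hsum.of_nonneg_of_le (fun n => mul_nonneg (hb n) (ramp_nonneg _))
    fun n => mul_le_of_le_one_right (hb n) (ramp_le_one _)

lemma isDecayProfile_rampSum : IsDecayProfile (rampSum b T) where
  continuous := continuous_tsum
    (fun n => continuous_const.mul (continuous_ramp.comp (continuous_const.sub continuous_id))) hsum
    fun n t => by
      rw [Real.norm_of_nonneg (mul_nonneg (hb n) (ramp_nonneg _))]
      exact mul_le_of_le_one_right (hb n) (ramp_le_one _)
  antitone _ _ htt' := (summable_rampSum T hb hsum _).tsum_le_tsum
    (fun n => mul_le_mul_of_nonneg_left (monotone_ramp (by linarith)) (hb n))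
    (summable_rampSum T hb hsum _)
  tendsto := by
    unfold rampSum
    simpa using tendsto_tsum_of_dominated_convergence (f := fun t n => b n * ramp (T n - t))
      (g := 0) hsum
      (fun n => tendsto_const_nhds.congr' <| (eventually_ge_atTop (T n)).mono fun t ht => by
        simp [ramp_of_nonpos (sub_nonpos.mpr ht)])
      (Eventually.of_forall fun t n => by
        rw [Real.norm_of_nonneg (mul_nonneg (hb n) (ramp_nonneg _))]
        exact mul_le_of_le_one_right (hb n) (ramp_le_one _))
  nonneg _ := tsum_nonneg fun n => mul_nonneg (hb n) (ramp_nonneg _)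

-- On `[T n, T (n + 1))`, where `y ≤ b n`, the `n`-th ramp is still at full height.
lemma le_rampSum {y t : ℝ} (h0 : T 0 ≤ t) (hT : ∃ n, t < T n) (hy : ∀ n, T n ≤ t → y ≤ b n) :
    y ≤ rampSum b (fun n => T (n + 1) + 1) t := by
  classical
  have hspec := Nat.find_spec hT
  obtain ⟨n, hn⟩ : ∃ n, Nat.find hT = n + 1 :=
    Nat.exists_eq_succ_of_ne_zero fun h => (h ▸ hspec).not_ge h0
  have hTn : T n ≤ t := not_lt.mp (Nat.find_min hT (by omega))
  rw [hn] at hspec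
  calc y ≤ b n := hy n hTn
    _ = b n * ramp (T (n + 1) + 1 - t) := by rw [ramp_of_one_le (by linarith), mul_one]
    _ ≤ rampSum b (fun n => T (n + 1) + 1) t :=
      (summable_rampSum (fun n => T (n + 1) + 1) hb hsum t).le_tsum n fun j _ =>
        mul_nonneg (hb j) (ramp_nonneg _)

end rampSum

theorem exists_isDecayProfile_ge {ι : Type*} (F : ι → ℝ → ℝ) {M : ℝ} (hM : 0 ≤ M)
    (hF : ∀ i t, 0 ≤ t → F i t ≤ M)
    (hdecay : ∀ ε > 0, ∃ τ, ∀ i t, τ ≤ t → F i t ≤ ε) :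
    ∃ g, IsDecayProfile g ∧ ∀ i t, 0 ≤ t → F i t ≤ g t := by
  set b : ℕ → ℝ := fun n => (M + 1) * 2⁻¹ ^ n
  have hb : ∀ n, 0 < b n := fun n => by positivity
  have hsum : Summable b := (summable_geometric_of_lt_one (by norm_num) (by norm_num)).mul_left _
  choose τ hτ using fun n => hdecay (b n) (hb n)
  -- After time `T n` the bound `b n` holds; at `T 0 = 0` it is the bound `M`.
  set T : ℕ → ℝ := fun n => if n = 0 then 0 else max (τ n) n
  refine ⟨_, isDecayProfile_rampSum _ (fun n => (hb n).le) hsum, fun i t ht =>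
    le_rampSum T (fun n => (hb n).le) hsum (by simpa [T] using ht) ?_ fun n hn => ?_⟩
  · obtain ⟨n, hn⟩ := exists_nat_gt t
    refine ⟨n + 1, ?_⟩
    simp only [T, Nat.add_one_ne_zero, if_false]
    push_cast
    exact lt_max_of_lt_right (by linarith)
  · rcases eq_or_ne n 0 with rfl | hn0
    · simpa [b] using (hF i t ht).trans (by linarith)
    · exact hτ n i t (le_trans (by simp [T, hn0]) hn)

-- The `k`-th profile is switched on as the radius increases from `k - 1` to `k`.
noncomputable def radialEnvelope (h : ℕ → ℝ → ℝ) (r t : ℝ) : ℝ :=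
  ∑' k : ℕ, ramp (r - k + 1) * h k t

section radialEnvelope

open Finset

variable {h : ℕ → ℝ → ℝ}

lemma radialEnvelope_eq_sum {r : ℝ} {N : ℕ} (hN : r + 1 ≤ N) (t : ℝ) :
    radialEnvelope h r t = ∑ k ∈ range N, ramp (r - k + 1) * h k t :=
  tsum_eq_sum fun k hk => by
    have : (N : ℝ) ≤ k := by exact_mod_cast not_lt.mp (mem_range.not.mp hk)
    rw [ramp_of_nonpos (by linarith), zero_mul]

lemma continuous_radialEnvelope (hc : ∀ k, Continuous (h k)) :
    Continuous fun p : ℝ × ℝ => radialEnvelope h p.1 p.2 := by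
  refine continuous_iff_continuousAt.mpr fun p => ?_
  obtain ⟨N, hN⟩ := exists_nat_gt (p.1 + 1)
  refine ContinuousAt.congr (f := fun q : ℝ × ℝ => ∑ k ∈ range N, ramp (q.1 - k + 1) * h k q.2)
    (continuous_finsetSum _ fun k _ => ?_).continuousAt ?_
  · exact (continuous_ramp.comp ((continuous_fst.sub continuous_const).add continuous_const)).mul
      ((hc k).comp continuous_snd)
  · filter_upwards [(isOpen_lt (continuous_fst.add continuous_const) continuous_const).mem_nhds hN]
      with q hq
    exact (radialEnvelope_eq_sum hq.le q.2).symm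

variable (hh : ∀ k, IsDecayProfile (h k))
include hh

lemma monotone_radialEnvelope (t : ℝ) : Monotone fun r => radialEnvelope h r t := by
  intro r r' hrr'
  obtain ⟨N, hN⟩ := exists_nat_ge (r' + 1)
  simp only [radialEnvelope_eq_sum (by linarith : r + 1 ≤ N), radialEnvelope_eq_sum hN]
  exact sum_le_sum fun k _ =>
    mul_le_mul_of_nonneg_right (monotone_ramp (by linarith)) ((hh k).nonneg t)

lemma le_radialEnvelope {k : ℕ} {r : ℝ} (hk : (k : ℝ) ≤ r) (t : ℝ) :
    h k t ≤ radialEnvelope h r t := by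
  obtain ⟨N, hN⟩ := exists_nat_ge (r + 1)
  have hkN : k ∈ range N := mem_range.mpr (by exact_mod_cast (by linarith : (k : ℝ) < N))
  rw [radialEnvelope_eq_sum hN]
  calc h k t = ramp (r - k + 1) * h k t := by rw [ramp_of_one_le (by linarith), one_mul]
    _ ≤ _ := single_le_sum (f := fun j : ℕ => ramp (r - j + 1) * h j t)
      (fun (j : ℕ) _ => mul_nonneg (ramp_nonneg _) ((hh j).nonneg t)) hkN

lemma isDecayProfile_radialEnvelope (r : ℝ) : IsDecayProfile (radialEnvelope h r) := by
  obtain ⟨N, hN⟩ := exists_nat_ge (r + 1)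
  have heq : radialEnvelope h r = fun t => ∑ k ∈ range N, ramp (r - k + 1) * h k t :=
    funext (radialEnvelope_eq_sum hN)
  rw [heq]
  exact {
    continuous := continuous_finsetSum _ fun k _ => continuous_const.mul (hh k).continuous
    antitone := fun t t' htt' => sum_le_sum fun k _ =>
      mul_le_mul_of_nonneg_left ((hh k).antitone htt') (ramp_nonneg _)
    tendsto := by
      simpa using tendsto_finsetSum (range N) fun k _ =>
        (hh k).tendsto.const_mul (ramp (r - k + 1))
    nonneg := fun t => sum_nonneg fun k _ => mul_nonneg (ramp_nonneg _) ((hh k).nonneg t) }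

end radialEnvelope

-- Adding `r e^{-t}` makes the minimum strictly monotone in both variables.
theorem exists_classKL_ge_min {σ : ℝ → ℝ} (hσ : ClassK σ) {G : ℝ → ℝ → ℝ}
    (hGc : Continuous fun p : ℝ × ℝ => G p.1 p.2) (hGm : ∀ t, Monotone fun r => G r t)
    (hGd : ∀ r, IsDecayProfile (G r)) :
    ∃ β, ClassKL β ∧ ∀ r t, 0 ≤ r → min (σ r) (G r t) ≤ β r t := by
  have hexp : Continuous fun p : ℝ × ℝ => p.1 * Real.exp (-p.2) :=
    continuous_fst.mul (Real.continuous_exp.comp continuous_snd.neg)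
  refine ⟨fun r t => min (σ r) (G r t) + r * Real.exp (-t), ⟨?_, fun t _ => ⟨?_, ?_, ?_⟩,
    fun r hr => ⟨?_, ?_⟩⟩, fun r t hr => le_add_of_nonneg_right (by positivity)⟩
  · have hσ' : ContinuousOn (fun p : ℝ × ℝ => σ p.1) (Ici 0 ×ˢ Ici 0) :=
      hσ.1.comp continuous_fst.continuousOn fun p hp => (mem_prod.mp hp).1
    exact (fun p hp => ((hσ' p hp).min hGc.continuousWithinAt).add hexp.continuousWithinAt)
  · have hG : Continuous fun r => G r t := hGc.comp (continuous_id.prodMk continuous_const)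
    exact fun r hr => ((hσ.1 r hr).min hG.continuousWithinAt).add
      (continuous_id.mul continuous_const).continuousWithinAt
  · intro r hr r' hr' hrr'
    exact add_lt_add_of_le_of_lt (min_le_min (hσ.le_of_le hr hrr'.le) (hGm t hrr'.le))
      (mul_lt_mul_of_pos_right hrr' (Real.exp_pos _))
  · simp [hσ.2.2, (hGd 0).nonneg t]
  · intro t _ t' _ htt'
    exact add_lt_add_of_le_of_lt (min_le_min le_rfl ((hGd r).antitone htt'.le))
      (mul_lt_mul_of_pos_left (Real.exp_lt_exp.mpr (neg_lt_neg htt')) hr)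
  · have := (tendsto_const_nhds (x := σ r)).min (hGd r).tendsto
    rw [min_eq_right (hσ.nonneg hr.le)] at this
    simpa using this.add (Real.tendsto_exp_neg_atTop_nhds_zero.const_mul r)

theorem exists_classKL_bound {ι : Type*} (ρ : ι → ℝ) (hρ : ∀ i, 0 ≤ ρ i) (F : ι → ℝ → ℝ)
    {σ : ℝ → ℝ} (hσ : ClassK σ) (hF : ∀ i t, 0 ≤ t → F i t ≤ σ (ρ i))
    (hdecay : ∀ ε > 0, ∀ r > 0, ∃ τ, ∀ i, ρ i ≤ r → ∀ t, τ ≤ t → F i t ≤ ε) :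
    ∃ β, ClassKL β ∧ ∀ i t, 0 ≤ t → F i t ≤ β (ρ i) t := by
  have level (k : ℕ) :
      ∃ g, IsDecayProfile g ∧ ∀ i, ρ i ≤ k + 1 → ∀ t, 0 ≤ t → F i t ≤ g t := by
    obtain ⟨g, hg, hle⟩ := exists_isDecayProfile_ge (fun i : {i // ρ i ≤ k + 1} => F i)
      (hσ.nonneg (by positivity : (0:ℝ) ≤ k + 1))
      (fun i t ht => (hF i t ht).trans (hσ.le_of_le (hρ i) i.2))
      fun ε hε => (hdecay ε hε (k + 1) (by positivity)).imp fun τ hτ i t ht => hτ i i.2 t ht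
    exact ⟨g, hg, fun i hi t ht => hle ⟨i, hi⟩ t ht⟩
  choose h hh hle using level
  -- The envelope at radius `ρ i` contains level `⌊ρ i⌋₊`, which covers radii up to `⌊ρ i⌋₊ + 1`.
  obtain ⟨β, hβ, hβle⟩ := exists_classKL_ge_min hσ
    (continuous_radialEnvelope fun k => (hh k).continuous) (monotone_radialEnvelope hh)
    (isDecayProfile_radialEnvelope hh)
  refine ⟨β, hβ, fun i t ht => le_trans (le_min (hF i t ht) ?_) (hβle _ t (hρ i))⟩
  exact (hle ⌊ρ i⌋₊ i (Nat.lt_floor_add_one _).le t ht).trans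
    (le_radialEnvelope hh (Nat.floor_le (hρ i)) t)

namespace ControlSystem

variable {X U : Type*} [NormedAddCommGroup X] [NormedSpace ℝ X] [Zero U]

lemma phi_split (S : ControlSystem X U) {s t : ℝ} (hs : 0 ≤ s) (hst : s ≤ t) (x : X)
    {u : ℝ → U} (hu : u ∈ S.inputs) :
    S.phi t x u = S.phi (t - s) (S.phi s x u) (fun r => u (r + s)) := by
  rw [S.cocycle s hs (t - s) (by linarith) x u hu, add_sub_cancel]

section FromISS

variable {S : ControlSystem X U} (h : S.ISS)
include h

lemma ISS.phi_zero {t : ℝ} (ht : 0 ≤ t) : S.phi t 0 zeroIn = 0 := by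
  obtain ⟨β, γ, hβ, hγ, hb⟩ := h
  have := hb 0 zeroIn S.zero_mem t ht
  have hu0 : S.Unorm zeroIn = 0 := S.Unorm_zero
  have hβ0 : β 0 t = 0 := (hβ.2.1 t ht).2.2
  rw [norm_zero, hu0, hγ.2.2, hβ0, add_zero] at this
  exact norm_le_zero_iff.mp this

lemma ISS.ugs : S.UGS := by
  obtain ⟨β, γ, hβ, hγ, hb⟩ := h
  obtain ⟨σ, hσ, hβσ⟩ := (hβ.2.1 0 le_rfl).exists_classKinf_ge
  obtain ⟨γ', hγ', hγγ'⟩ := hγ.exists_classKinf_ge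
  refine ⟨σ, γ', hσ, Or.inl hγ', fun t ht x u hu => (hb x u hu t ht).trans (add_le_add ?_ ?_)⟩
  · exact (hβ.le_of_le_right (norm_nonneg x) le_rfl ht).trans (hβσ _ (norm_nonneg x))
  · exact hγγ' _ (S.Unorm_nonneg u)

lemma ISS.uag : S.UAG := by
  obtain ⟨β, γ, hβ, hγ, hb⟩ := h
  obtain ⟨γ', hγ', hγγ'⟩ := hγ.exists_classKinf_ge
  refine ⟨γ', Or.inl hγ', fun ε hε r hr => ?_⟩
  obtain ⟨τ, hτ0, hτ⟩ := hβ.exists_forall_le hr.le hε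
  refine ⟨τ, hτ0, fun u hu x hx t ht => (hb x u hu t (hτ0.trans ht)).trans (add_le_add ?_ ?_)⟩
  · exact (hβ.le_of_le_left (hτ0.trans ht) (norm_nonneg x) hx.le).trans (hτ t ht)
  · exact hγγ' _ (S.Unorm_nonneg u)

lemma ISS.cep : S.CEP := by
  refine ⟨fun t ht => h.phi_zero ht, fun ε hε _ _ => ?_⟩
  obtain ⟨β, γ, hβ, hγ, hb⟩ := h
  obtain ⟨δ, hδ, hδε⟩ := ((hβ.2.1 0 le_rfl).add hγ).exists_pos_forall_le hε
  refine ⟨δ, hδ, fun t ht x hx u hu huδ => (hb x u hu t ht.1).trans ?_⟩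
  have hβx := (hβ.le_of_le_right (norm_nonneg x) le_rfl ht.1).trans
    (hβ.le_of_le_left le_rfl (norm_nonneg x) hx)
  linarith [hγ.le_of_le (S.Unorm_nonneg u) huδ, hδε δ hδ.le le_rfl]

lemma ISS.brs : S.BRS := by
  obtain ⟨β, γ, hβ, hγ, hb⟩ := h
  refine fun C hC _ _ => ⟨β C 0 + γ C, fun x hx u hu huC t ht => (hb x u hu t ht.1).trans ?_⟩
  exact add_le_add ((hβ.le_of_le_left ht.1 (norm_nonneg x) hx).trans
    (hβ.le_of_le_right hC.le le_rfl ht.1)) (hγ.le_of_le (S.Unorm_nonneg u) huC)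

end FromISS

variable {S : ControlSystem X U}

lemma UGS.uls (h : S.UGS) : S.ULS := by
  obtain ⟨σ, γ, hσ, hγ, hb⟩ := h
  exact ⟨σ, γ, hσ, hγ, 1, one_pos, fun t ht x _ u hu _ => hb t ht x u hu⟩

lemma UAG.ulim (h : S.UAG) : S.ULIM := by
  obtain ⟨γ, hγ, hb⟩ := h
  refine ⟨γ, hγ.classK0, fun ε hε r hr => ?_⟩
  obtain ⟨τ, hτ0, hτ⟩ := hb ε hε (r + 1) (by linarith)
  exact ⟨τ, hτ0, fun x hx u hu => ⟨τ, ⟨hτ0, le_rfl⟩, hτ u hu x (by linarith) τ le_rfl⟩⟩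

lemma ULIM.exists_classKinf (h : S.ULIM) :
    ∃ γ, ClassKinf γ ∧ ∀ ε > 0, ∀ r > 0, ∃ τ : ℝ, 0 ≤ τ ∧
      ∀ x : X, ‖x‖ ≤ r → ∀ u ∈ S.inputs, ∃ t ∈ Icc (0:ℝ) τ,
        ‖S.phi t x u‖ ≤ ε + γ (S.Unorm u) := by
  obtain ⟨γ, hγ, hb⟩ := h
  obtain ⟨γ', hγ', hγγ'⟩ := hγ.exists_classKinf_ge
  refine ⟨γ', hγ', fun ε hε r hr =>
    (hb ε hε r hr).imp fun τ ⟨hτ0, hτ⟩ => ⟨hτ0, fun x hx u hu => ?_⟩⟩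
  obtain ⟨t, ht, hle⟩ := hτ x hx u hu
  exact ⟨t, ht, hle.trans (add_le_add le_rfl (hγγ' _ (S.Unorm_nonneg u)))⟩

def EpsDeltaStable (S : ControlSystem X U) : Prop :=
  ∀ ε > 0, ∃ δ > 0, ∀ t : ℝ, 0 ≤ t → ∀ x : X, ‖x‖ ≤ δ →
    ∀ u ∈ S.inputs, S.Unorm u ≤ δ → ‖S.phi t x u‖ ≤ ε

lemma ULS.epsDeltaStable (h : S.ULS) : S.EpsDeltaStable := by
  obtain ⟨σ, γ, hσ, hγ, r, hr, hb⟩ := h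
  obtain ⟨γ', hγ', hγγ'⟩ := hγ.classK0.exists_classKinf_ge
  intro ε hε
  obtain ⟨δ₁, hδ₁, hσδ⟩ := hσ.1.exists_pos_forall_le (half_pos hε)
  obtain ⟨δ₂, hδ₂, hγδ⟩ := hγ'.1.exists_pos_forall_le (half_pos hε)
  refine ⟨min r (min δ₁ δ₂), by positivity, fun t ht x hx u hu huδ => ?_⟩
  simp only [le_min_iff] at hx huδ
  linarith [hb t ht x hx.1 u hu huδ.1, hσδ _ (norm_nonneg x) hx.2.1,
    hγγ' _ (S.Unorm_nonneg u), hγδ _ (S.Unorm_nonneg u) huδ.2.2]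

-- CEP controls the time interval `[0, τ + 1]`; UAG with radius `1` takes over after time `τ`.
lemma UAG.epsDeltaStable (huag : S.UAG) (hcep : S.CEP) : S.EpsDeltaStable := by
  obtain ⟨γ, hγ, hb⟩ := huag
  obtain ⟨γ', hγ', hγγ'⟩ := hγ.classK0.exists_classKinf_ge
  intro ε hε
  obtain ⟨δ₁, hδ₁, hγδ⟩ := hγ'.1.exists_pos_forall_le (half_pos hε)
  obtain ⟨τ, hτ0, hτ⟩ := hb (ε / 2) (half_pos hε) 1 one_pos
  obtain ⟨δ₂, hδ₂, hcepδ⟩ := hcep.2 ε hε (τ + 1) (by linarith)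
  refine ⟨min (1 / 2) (min δ₁ δ₂), by positivity, fun t ht x hx u hu huδ => ?_⟩
  simp only [le_min_iff] at hx huδ
  rcases le_or_gt t (τ + 1) with htτ | htτ
  · exact hcepδ t ⟨ht, htτ⟩ x hx.2.2 u hu huδ.2.2
  · linarith [hτ u hu x (by linarith) t (by linarith), hγγ' _ (S.Unorm_nonneg u),
      hγδ _ (S.Unorm_nonneg u) huδ.2.1]

def UniformlyBounded (S : ControlSystem X U) : Prop :=
  ∀ C > 0, ∃ M, ∀ x : X, ‖x‖ ≤ C → ∀ u ∈ S.inputs, S.Unorm u ≤ C →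
    ∀ t : ℝ, 0 ≤ t → ‖S.phi t x u‖ ≤ M

lemma norm_phi_le_of_returns {P : X → Prop} {C M : ℝ}
    (hret : ∀ y, P y → ∀ v ∈ S.inputs, S.Unorm v ≤ C →
      ∃ s, 1 ≤ s ∧ P (S.phi s y v) ∧ ∀ t ∈ Icc 0 s, ‖S.phi t y v‖ ≤ M)
    {y : X} (hy : P y) {v : ℝ → U} (hv : v ∈ S.inputs) (hvC : S.Unorm v ≤ C) {t : ℝ}
    (ht : 0 ≤ t) : ‖S.phi t y v‖ ≤ M := by
  suffices ∀ n : ℕ, ∀ y, P y → ∀ v ∈ S.inputs, S.Unorm v ≤ C →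
      ∀ t ∈ Icc 0 (n : ℝ), ‖S.phi t y v‖ ≤ M from
    this ⌈t⌉₊ y hy v hv hvC t ⟨ht, Nat.le_ceil t⟩
  intro n
  induction n with
  | zero =>
    intro y hy v hv hvC t ht
    obtain ⟨s, hs, -, hM⟩ := hret y hy v hv hvC
    exact hM t ⟨ht.1, by linarith [ht.2, show ((0 : ℕ) : ℝ) = 0 from Nat.cast_zero]⟩
  | succ n ih =>
    intro y hy v hv hvC t ht
    obtain ⟨s, hs, hPs, hM⟩ := hret y hy v hv hvC
    rcases le_or_gt t s with hts | hts
    · exact hM t ⟨ht.1, hts⟩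
    · rw [S.phi_split (by linarith) hts.le y hv]
      exact ih _ hPs _ (S.shift_mem v hv s (by linarith))
        ((S.shift_norm v hv s (by linarith)).trans hvC) (t - s)
        ⟨by linarith, by push_cast at ht; linarith [ht.2]⟩

lemma ULIM.exists_bounded_return (hulim : S.ULIM) (hbrs : S.BRS) (C : ℝ) :
    ∃ ρ, ∀ R > 0, ∃ M, ∀ x : X, ‖x‖ ≤ R → ∀ u ∈ S.inputs, S.Unorm u ≤ C →
      ∃ s, 0 ≤ s ∧ ‖S.phi s x u‖ ≤ ρ ∧ ∀ t ∈ Icc 0 s, ‖S.phi t x u‖ ≤ M := by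
  obtain ⟨γ, hγ, hul⟩ := hulim.exists_classKinf
  refine ⟨1 + γ C, fun R hR => ?_⟩
  obtain ⟨τ, hτ0, hτ⟩ := hul 1 one_pos R hR
  obtain ⟨M, hM⟩ := hbrs (max R C) (lt_max_of_lt_left hR) (τ + 1) (by linarith)
  refine ⟨M, fun x hx u hu huC => ?_⟩
  obtain ⟨s, hs, hsx⟩ := hτ x hx u hu
  refine ⟨s, hs.1, hsx.trans (add_le_add le_rfl (hγ.1.le_of_le (S.Unorm_nonneg u) huC)),
    fun t ht => hM x (hx.trans (le_max_left _ _)) u hu (huC.trans (le_max_right _ _)) t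
      ⟨ht.1, by linarith [ht.2, hs.2]⟩⟩

lemma ULIM.uniformlyBounded (hulim : S.ULIM) (hbrs : S.BRS) : S.UniformlyBounded := by
  intro C hC
  obtain ⟨ρ, hret⟩ := hulim.exists_bounded_return hbrs C
  obtain ⟨M₁, hM₁⟩ := hbrs (max C ρ) (lt_max_of_lt_left hC) 1 one_pos
  obtain ⟨M₂, hM₂⟩ := hret (max M₁ 1) (lt_max_of_lt_right one_pos)
  obtain ⟨M₀, hM₀⟩ := hret C hC
  -- From the ball of radius `ρ`: one time unit, then a return to that ball.
  have hball : ∀ y : X, ‖y‖ ≤ ρ → ∀ v ∈ S.inputs, S.Unorm v ≤ C → ∀ t, 0 ≤ t →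
      ‖S.phi t y v‖ ≤ max M₁ M₂ := by
    refine fun y hy v hv hvC t ht => norm_phi_le_of_returns (S := S) (P := fun y => ‖y‖ ≤ ρ)
      (fun y hy v hv hvC => ?_) hy hv hvC ht
    have hy' : ‖y‖ ≤ max C ρ := hy.trans (le_max_right _ _)
    have hvC' : S.Unorm v ≤ max C ρ := hvC.trans (le_max_left _ _)
    obtain ⟨s, hs, hsρ, hsM⟩ := hM₂ (S.phi 1 y v)
      ((hM₁ y hy' v hv hvC' 1 ⟨zero_le_one, le_rfl⟩).trans (le_max_left _ _)) _
      (S.shift_mem v hv 1 zero_le_one) ((S.shift_norm v hv 1 zero_le_one).trans hvC)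
    refine ⟨1 + s, by linarith, by rwa [← S.cocycle 1 zero_le_one s hs y v hv], fun t ht => ?_⟩
    rcases le_or_gt t 1 with ht1 | ht1
    · exact (hM₁ y hy' v hv hvC' t ⟨ht.1, ht1⟩).trans (le_max_left _ _)
    · rw [S.phi_split zero_le_one ht1.le y hv]
      exact (hsM (t - 1) ⟨by linarith, by linarith [ht.2]⟩).trans (le_max_right _ _)
  refine ⟨max M₀ (max M₁ M₂), fun x hx u hu huC t ht => ?_⟩
  obtain ⟨s, hs, hsρ, hsM⟩ := hM₀ x hx u hu huC
  rcases le_or_gt t s with hts | hts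
  · exact (hsM t ⟨ht, hts⟩).trans (le_max_left _ _)
  · rw [S.phi_split hs hts.le x hu]
    exact (hball _ hsρ _ (S.shift_mem u hu s hs) ((S.shift_norm u hu s hs).trans huC) (t - s)
      (by linarith)).trans (le_max_right _ _)

lemma UniformlyBounded.ugs (hb : S.UniformlyBounded) (hs : S.EpsDeltaStable) : S.UGS := by
  obtain ⟨σ, hσ, hle⟩ := exists_classKinf_bound
    (ι := {p : ℝ × X × (ℝ → U) // 0 ≤ p.1 ∧ p.2.2 ∈ S.inputs})
    (fun p => max ‖p.1.2.1‖ (S.Unorm p.1.2.2)) (fun p => le_max_of_le_left (norm_nonneg _))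
    (fun p => ‖S.phi p.1.1 p.1.2.1 p.1.2.2‖)
    (fun C hC => (hb C hC).imp fun M hM p hp =>
      hM _ (le_of_max_le_left hp) _ p.2.2 (le_of_max_le_right hp) _ p.2.1)
    (fun ε hε => (hs ε hε).imp fun δ ⟨hδ, hδε⟩ => ⟨hδ, fun p hp =>
      hδε _ p.2.1 _ (le_of_max_le_left hp) _ p.2.2 (le_of_max_le_right hp)⟩)
  refine ⟨σ, σ, hσ, Or.inl hσ, fun t ht x u hu => (hle ⟨(t, x, u), ht, hu⟩).trans ?_⟩
  rcases le_total ‖x‖ (S.Unorm u) with hxu | hxu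
  · rw [max_eq_right hxu]; linarith [hσ.1.nonneg (norm_nonneg x)]
  · rw [max_eq_left hxu]; linarith [hσ.1.nonneg (S.Unorm_nonneg u)]

lemma ULIM.uag (hulim : S.ULIM) (hugs : S.UGS) : S.UAG := by
  obtain ⟨γL, hγL, hul⟩ := hulim.exists_classKinf
  obtain ⟨σ, γ₀, hσ, hγ₀, hb⟩ := hugs
  obtain ⟨γh, hγh, hγ₀h⟩ := hγ₀.classK0.exists_classKinf_ge
  set Γ : ℝ → ℝ := fun s => σ (2 * γL s) + γh s
  obtain ⟨Γ', hΓ', hΓΓ'⟩ :=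
    ((hσ.1.comp (hγL.1.const_mul two_pos)).add hγh.1).exists_classKinf_ge
  refine ⟨Γ', Or.inl hΓ', fun ε hε r hr => ?_⟩
  obtain ⟨δ, hδ, hσδ⟩ := hσ.1.exists_pos_forall_le hε
  obtain ⟨τ, hτ0, hτ⟩ := hul (δ / 2) (half_pos hδ) r hr
  refine ⟨τ, hτ0, fun u hu x hx t ht => ?_⟩
  obtain ⟨s, hs, hsx⟩ := hτ x hx.le u hu
  have hus := S.shift_norm u hu s hs.1
  have hsplit := hσ.1.map_add_le (half_pos hδ).le (hγL.1.nonneg (S.Unorm_nonneg u))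
  calc ‖S.phi t x u‖ = ‖S.phi (t - s) (S.phi s x u) (fun r => u (r + s))‖ := by
        rw [S.phi_split hs.1 (hs.2.trans ht) x hu]
    _ ≤ σ ‖S.phi s x u‖ + γ₀ (S.Unorm fun r => u (r + s)) :=
        hb _ (by linarith [hs.2]) _ _ (S.shift_mem u hu s hs.1)
    _ ≤ σ (δ / 2 + γL (S.Unorm u)) + γh (S.Unorm u) :=
        add_le_add (hσ.1.le_of_le (norm_nonneg _) hsx) ((hγ₀h _ (S.Unorm_nonneg _)).trans
          (hγh.1.le_of_le (S.Unorm_nonneg _) hus))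
    _ ≤ σ (2 * (δ / 2)) + Γ (S.Unorm u) := by linarith
    _ ≤ ε + Γ' (S.Unorm u) :=
        add_le_add (hσδ _ (by positivity) (by linarith)) (hΓΓ' _ (S.Unorm_nonneg u))

lemma UAG.iss (huag : S.UAG) (hugs : S.UGS) : S.ISS := by
  obtain ⟨σ, γ₁, hσ, hγ₁, hb⟩ := hugs
  obtain ⟨γ₂, hγ₂, hdecay⟩ := huag
  obtain ⟨γ₁', hγ₁', hγ₁γ₁'⟩ := hγ₁.classK0.exists_classKinf_ge
  obtain ⟨γ₂', hγ₂', hγ₂γ₂'⟩ := hγ₂.classK0.exists_classKinf_ge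
  set γ : ℝ → ℝ := fun s => γ₁' s + γ₂' s
  obtain ⟨β, hβ, hle⟩ := exists_classKL_bound (ι := X × S.inputs) (fun p => ‖p.1‖)
    (fun p => norm_nonneg _) (fun p t => ‖S.phi t p.1 p.2‖ - γ (S.Unorm p.2)) hσ.1
    (fun ⟨x, u, hu⟩ t ht => by
      linarith [hb t ht x u hu, hγ₁γ₁' _ (S.Unorm_nonneg u), hγ₂'.1.nonneg (S.Unorm_nonneg u)])
    (fun ε hε r _ => (hdecay ε hε (r + 1) (by linarith)).imp fun τ ⟨_, hτ⟩ ⟨x, u, hu⟩ hx t ht => by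
      linarith [hτ u hu x (by simp only at hx; linarith) t ht, hγ₂γ₂' _ (S.Unorm_nonneg u),
        hγ₁'.1.nonneg (S.Unorm_nonneg u)])
  exact ⟨β, γ, hβ, hγ₁'.1.add hγ₂'.1, fun x u hu t ht => by linarith [hle (x, ⟨u, hu⟩) t ht]⟩

/-- **Characterization of ISS** (Theorem: ISS ⇔ UAG ∧ CEP ∧ BRS ⇔ ULIM ∧ ULS ∧ BRS
⇔ ULIM ∧ UGS) for forward complete control systems. -/
theorem iss_superposition (S : ControlSystem X U) :
    (S.ISS ↔ S.UAG ∧ S.CEP ∧ S.BRS) ∧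
    (S.ISS ↔ S.ULIM ∧ S.ULS ∧ S.BRS) ∧
    (S.ISS ↔ S.ULIM ∧ S.UGS) := by
  refine ⟨⟨fun h => ⟨h.uag, h.cep, h.brs⟩, fun ⟨huag, hcep, hbrs⟩ => ?_⟩,
    ⟨fun h => ⟨h.uag.ulim, h.ugs.uls, h.brs⟩, fun ⟨hulim, huls, hbrs⟩ => ?_⟩,
    ⟨fun h => ⟨h.uag.ulim, h.ugs⟩, fun ⟨hulim, hugs⟩ => (hulim.uag hugs).iss hugs⟩⟩
  · exact huag.iss ((huag.ulim.uniformlyBounded hbrs).ugs (huag.epsDeltaStable hcep))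
  · have hugs := (hulim.uniformlyBounded hbrs).ugs huls.epsDeltaStable
    exact (hulim.uag hugs).iss hugs

end ControlSystem
end

section
/- If a forward complete control system Σ=(X,𝒰,φ) has bounded reachability sets (BRS) and has the uniform limit property (ULIM), then Σ is uniformly globally bounded (UGB). -/
open Set Filter

namespace ControlSystem

variable {X U : Type*} [NormedAddCommGroup X] [NormedSpace ℝ X] [Zero U]

/-- Uniform global boundedness. -/
def UGB (S : ControlSystem X U) : Prop :=
  ∃ σ γ c, ClassKinf σ ∧ ClassKinf0 γ ∧ (0:ℝ) < c ∧
    ∀ t : ℝ, 0 ≤ t → ∀ x : X, ∀ u ∈ S.inputs,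
      ‖S.phi t x u‖ ≤ σ ‖x‖ + γ (S.Unorm u) + c

/-!
Fix `r` and let `ρ > r + γ(r) + 1`. By ULIM (with `ε = 1` and radius `ρ`) and the cocycle property,
a trajectory with `‖x‖ ≤ r`, `‖u‖ ≤ r` that is in the `ρ`-ball at some time is strictly inside it
again within a uniform time `τ`; by continuity it therefore visits the `ρ`-ball in every time
window of length `τ`. From such a visit on, BRS bounds it for the next `τ` time units, so the whole
trajectory is bounded by some `M(r)`. A nondecreasing `M` lies below `σ + c` for the
`K∞`-function `σ(r) = r + ∫_r^{r+1} M - ∫_0^1 M`.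
-/

theorem _root_.ClassK.nonneg_s3 {σ : ℝ → ℝ} (h : ClassK σ) {a : ℝ} (ha : 0 ≤ a) : 0 ≤ σ a :=
  h.2.2 ▸ h.2.1.monotoneOn self_mem_Ici ha ha

theorem _root_.ClassK.map_max_le_add {σ : ℝ → ℝ} (h : ClassK σ) {a b : ℝ} (ha : 0 ≤ a)
    (hb : 0 ≤ b) : σ (max a b) ≤ σ a + σ b := by
  rcases le_total a b with hab | hab
  · rw [max_eq_right hab]; linarith [h.nonneg_s3 ha]
  · rw [max_eq_left hab]; linarith [h.nonneg_s3 hb]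

theorem _root_.ClassK0.monotoneOn {γ : ℝ → ℝ} (h : ClassK0 γ) : MonotoneOn γ (Ici 0) := by
  rcases h with h | h
  · exact h.2.1.monotoneOn
  · intro a ha b hb _
    rw [h a ha, h b hb]

theorem _root_.ClassK0.nonneg_s3 {γ : ℝ → ℝ} (h : ClassK0 γ) {a : ℝ} (ha : 0 ≤ a) : 0 ≤ γ a := by
  rcases h with h | h
  · exact h.nonneg_s3 ha
  · exact (h a ha).ge

theorem _root_.exists_monotone_forall_le_of_bddAbove {F : ℝ → Set ℝ} (hF : Monotone F)
    (hbdd : ∀ r, BddAbove (F r)) : ∃ g : ℝ → ℝ, Monotone g ∧ ∀ r, ∀ y ∈ F r, y ≤ g r :=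
  ⟨fun r => sSup (insert 0 (F r)),
    fun _ _ h =>
      csSup_le_csSup ((hbdd _).insert 0) (insert_nonempty _ _) (insert_subset_insert (hF h)),
    fun r _ hy => le_csSup ((hbdd r).insert 0) (mem_insert_of_mem _ hy)⟩

theorem _root_.Monotone.exists_classKinf_le_add_const {g : ℝ → ℝ} (hg : Monotone g) :
    ∃ σ c, ClassKinf σ ∧ 0 < c ∧ ∀ r, 0 ≤ r → g r ≤ σ r + c := by
  have hint : ∀ a b, IntervalIntegrable g MeasureTheory.volume a b :=
    fun _ _ => hg.intervalIntegrable
  set I : ℝ → ℝ := fun m => ∫ s in m..m + 1, g s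
  have hI_shift : ∀ m, I m = ∫ s in 0..1, g (s + m) := fun m => by
    rw [intervalIntegral.integral_comp_add_right, zero_add, add_comm]
  have hg_shift : ∀ m, Monotone fun s => g (s + m) :=
    fun m _ _ hab => hg (add_le_add_left hab m)
  have hI_mono : Monotone I := by
    intro m m' hmm'
    rw [hI_shift, hI_shift]
    exact intervalIntegral.integral_mono_on zero_le_one
      (hg_shift m).intervalIntegrable (hg_shift m').intervalIntegrable
      fun s _ => hg (by linarith)
  have hI_cont : Continuous I := by
    have hI_sub : I = fun m => (∫ s in 0..m + 1, g s) - ∫ s in 0..m, g s :=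
      funext fun m => (intervalIntegral.integral_interval_sub_left (hint _ _) (hint _ _)).symm
    rw [hI_sub]
    exact ((intervalIntegral.continuous_primitive hint 0).comp (continuous_add_const 1)).sub
      (intervalIntegral.continuous_primitive hint 0)
  have hg_le_I : ∀ m, g m ≤ I m := fun m => by
    simpa using intervalIntegral.integral_mono_on (le_add_of_nonneg_right zero_le_one)
      intervalIntegrable_const (hint _ _) fun s hs => hg hs.1
  refine ⟨fun m => m + (I m - I 0), |I 0| + 1, ⟨⟨?_, ?_, by simp⟩, ?_⟩, by positivity, ?_⟩
  · exact (continuous_id.add (hI_cont.sub continuous_const)).continuousOn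
  · intro a _ b _ hab
    linarith [hI_mono hab.le]
  · intro c
    refine ⟨max c 0, le_max_right c 0, ?_⟩
    linarith [hI_mono (le_max_right c 0), le_max_left c 0]
  · intro r hr
    linarith [hg_le_I r, le_abs_self (I 0)]

open scoped Topology in
theorem _root_.exists_mem_Icc_sub_le_of_returns {f : ℝ → ℝ} {ρ τ t : ℝ}
    (hf : ContinuousOn f (Ici 0)) (h0 : f 0 ≤ ρ)
    (hret : ∀ s, 0 ≤ s → f s ≤ ρ → ∃ h ∈ Icc 0 τ, f (s + h) < ρ) (ht : 0 ≤ t) :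
    ∃ s ∈ Icc 0 t, t - s ≤ τ ∧ f s ≤ ρ := by
  set K := Icc 0 t ∩ f ⁻¹' Iic ρ
  have hK : IsClosed K :=
    (hf.mono Icc_subset_Ici_self).preimage_isClosed_of_isClosed isClosed_Icc isClosed_Iic
  have hKbdd : BddAbove K := bddAbove_Icc.mono inter_subset_left
  have hsK : sSup K ∈ K := hK.csSup_mem ⟨0, left_mem_Icc.2 ht, h0⟩ hKbdd
  obtain ⟨⟨hs0, hst⟩, hsρ⟩ := hsK
  refine ⟨sSup K, ⟨hs0, hst⟩, not_lt.1 fun hlate => ?_, hsρ⟩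
  obtain ⟨h, ⟨hh0, hhτ⟩, hlt⟩ := hret _ hs0 hsρ
  have hh : h = 0 := by
    have := le_csSup hKbdd ⟨⟨by linarith, by linarith⟩, hlt.le⟩
    linarith
  rw [hh, add_zero] at hlt
  -- now `f (sSup K) < ρ` and `sSup K < t`, so `K` has points just to the right of `sSup K`
  have hright : ∀ᶠ z in 𝓝[>] sSup K, f z < ρ ∧ z < t :=
    ((hf.continuousWithinAt hs0).eventually_lt_const hlt).filter_mono
        (nhdsWithin_mono _ fun z hz => hs0.trans (le_of_lt hz)) |>.and
      (nhdsWithin_le_nhds (Iio_mem_nhds (by linarith)))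
  obtain ⟨z, ⟨hfz, hzt⟩, hsz⟩ := (hright.and self_mem_nhdsWithin).exists
  exact (le_csSup hKbdd ⟨⟨hs0.trans (le_of_lt hsz), hzt.le⟩, hfz.le⟩).not_gt hsz

def reachableNorms (S : ControlSystem X U) (r : ℝ) : Set ℝ :=
  {y | ∃ x u t, ‖x‖ ≤ r ∧ u ∈ S.inputs ∧ S.Unorm u ≤ r ∧ 0 ≤ t ∧ ‖S.phi t x u‖ = y}

theorem reachableNorms_mono (S : ControlSystem X U) : Monotone S.reachableNorms := by
  rintro r r' hr _ ⟨x, u, t, hx, hu, hur, ht, rfl⟩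
  exact ⟨x, u, t, hx.trans hr, hu, hur.trans hr, ht, rfl⟩

theorem bddAbove_reachableNorms {S : ControlSystem X U} (h1 : S.BRS) (h2 : S.ULIM) (r : ℝ) :
    BddAbove (S.reachableNorms r) := by
  obtain ⟨γ, hγ, hlim⟩ := h2
  set w := max r 0
  have hw : 0 ≤ w := le_max_right r 0
  have hγw : 0 ≤ γ w := hγ.nonneg_s3 hw
  set ρ := w + γ w + 2
  have hρ : 0 < ρ := by positivity
  obtain ⟨τ, hτ, hreturn⟩ := hlim 1 one_pos ρ hρ
  obtain ⟨M, hM⟩ := h1 ρ hρ (τ + 1) (by linarith)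
  refine ⟨M, ?_⟩
  rintro _ ⟨x, u, t, hx, hu, hur, ht, rfl⟩
  have hshift : ∀ s, 0 ≤ s →
      (fun z => u (z + s)) ∈ S.inputs ∧ S.Unorm (fun z => u (z + s)) ≤ w := fun s hs =>
    ⟨S.shift_mem u hu s hs, (S.shift_norm u hu s hs).trans (hur.trans (le_max_left r 0))⟩
  have hrecur : ∀ s, 0 ≤ s → ‖S.phi s x u‖ ≤ ρ → ∃ h ∈ Icc 0 τ, ‖S.phi (s + h) x u‖ < ρ := by
    intro s hs hsρ
    obtain ⟨h, hh, hbound⟩ := hreturn _ hsρ _ (hshift s hs).1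
    refine ⟨h, hh, ?_⟩
    have hγu : γ (S.Unorm fun z => u (z + s)) ≤ γ w :=
      hγ.monotoneOn (S.Unorm_nonneg _) hw (hshift s hs).2
    rw [← S.cocycle s hs h hh.1 x u hu]
    linarith
  obtain ⟨s, ⟨hs0, hst⟩, hts, hsρ⟩ :=
    exists_mem_Icc_sub_le_of_returns (S.cont x u hu).norm
      (by simp only [S.identity]; linarith [le_max_left r 0]) hrecur ht
  have hcocycle := S.cocycle s hs0 (t - s) (sub_nonneg.2 hst) x u hu
  rw [add_sub_cancel] at hcocycle
  rw [← hcocycle]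
  exact hM _ hsρ _ (hshift s hs0).1 (by linarith [(hshift s hs0).2]) _
    ⟨sub_nonneg.2 hst, by linarith⟩

/-- If a forward complete control system is BRS and has the uniform limit property,
then it is uniformly globally bounded. -/
theorem BRS.ULIM.toUGB (S : ControlSystem X U) (h1 : S.BRS) (h2 : S.ULIM) : S.UGB := by
  obtain ⟨g, hg, hreach⟩ := exists_monotone_forall_le_of_bddAbove S.reachableNorms_mono
    (bddAbove_reachableNorms h1 h2)
  obtain ⟨σ, c, hσ, hc, hgσ⟩ := hg.exists_classKinf_le_add_const
  refine ⟨σ, σ, c, hσ, Or.inl hσ, hc, fun t ht x u hu => ?_⟩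
  have hx := norm_nonneg x
  have hu' := S.Unorm_nonneg u
  calc ‖S.phi t x u‖ ≤ g (max ‖x‖ (S.Unorm u)) :=
        hreach _ _ ⟨x, u, t, le_max_left _ _, hu, le_max_right _ _, ht, rfl⟩
    _ ≤ σ (max ‖x‖ (S.Unorm u)) + c := hgσ _ (hx.trans (le_max_left _ _))
    _ ≤ σ ‖x‖ + σ (S.Unorm u) + c := by linarith [hσ.1.map_max_le_add hx hu']

end ControlSystem
end

section
/- For a forward complete control system Σ=(X,𝒰,φ) the following are equivalent: (i) Σ has bounded reachability sets (BRS); (ii) there exists a continuous function μ:ℝ₊³→ℝ₊ which is increasing with respect to the componentwise partial order on ℝ₊³ such that ‖φ(t,x,u)‖_X ≤ μ(‖x‖_X,‖u‖_𝒰,t) for all x∈X, u∈𝒰, t≥0; (iii) there exists a continuous function μ:ℝ₊³→ℝ₊ such that ‖φ(t,x,u)‖_X ≤ μ(‖x‖_X,‖u‖_𝒰,t) for all x∈X, u∈𝒰, t≥0. -/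
open Set Filter

namespace ControlSystem

variable {X U : Type*} [NormedAddCommGroup X] [NormedSpace ℝ X] [Zero U]

/-! A continuous bound gives BRS by compactness of `[0,C]² × [0,τ]`. Conversely, under BRS the
supremum `R(r)` of `‖φ(t,x,u)‖` over `‖x‖, ‖u‖, t ≤ r` is finite and nondecreasing in `r`; its
moving average `s ↦ ∫_s^{s+1} R` is continuous, nondecreasing and dominates `R`, and evaluated at
`max(r₁,r₂,r₃)` it is the required `μ`. -/

theorem _root_.Monotone.exists_continuous_monotone_ge {f : ℝ → ℝ} (hf : Monotone f) :
    ∃ g : ℝ → ℝ, Continuous g ∧ Monotone g ∧ f ≤ g := by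
  have hint : ∀ a b : ℝ, IntervalIntegrable f MeasureTheory.volume a b :=
    fun _ _ => hf.intervalIntegrable
  have hshift (s : ℝ) : ∫ t in s..s + 1, f t = ∫ t in (0:ℝ)..1, f (t + s) := by
    rw [intervalIntegral.integral_comp_add_right, zero_add, add_comm]
  have hf_add (s : ℝ) : Monotone fun t => f (t + s) := fun _ _ h => hf (by linarith)
  refine ⟨fun s => ∫ t in s..s + 1, f t, ?_, fun s s' hss' => ?_, fun s => ?_⟩
  · have hdiff : (fun s => ∫ t in s..s + 1, f t)
        = fun s => (∫ t in (0:ℝ)..s + 1, f t) - ∫ t in (0:ℝ)..s, f t :=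
      funext fun s => (intervalIntegral.integral_interval_sub_left (hint 0 _) (hint 0 _)).symm
    rw [hdiff]
    have hF := intervalIntegral.continuous_primitive hint 0
    exact (hF.comp (continuous_add_const 1)).sub hF
  · simp only [hshift]
    exact intervalIntegral.integral_mono_on zero_le_one (hf_add s).intervalIntegrable
      (hf_add s').intervalIntegrable fun t _ => hf (by linarith)
  · calc f s = ∫ _ in s..s + 1, f s := by simp
      _ ≤ ∫ t in s..s + 1, f t :=
        intervalIntegral.integral_mono_on (by linarith) intervalIntegrable_const (hint _ _)
          fun t ht => hf ht.1

variable (S : ControlSystem X U)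

def reachNorms (r : ℝ) : Set ℝ :=
  {y | ∃ x u t, ‖x‖ ≤ r ∧ u ∈ S.inputs ∧ S.Unorm u ≤ r ∧ t ∈ Icc 0 r ∧ y = ‖S.phi t x u‖}

/-- Equal to `sSup ∅ = 0` for `r < 0`, and meaningless unless `S` is BRS, since `sSup` of a set
of reals that is not bounded above is `0`. -/
noncomputable def reachBound (r : ℝ) : ℝ :=
  sSup (S.reachNorms r)

theorem reachNorms_mono {r r' : ℝ} (hr : r ≤ r') : S.reachNorms r ⊆ S.reachNorms r' := by
  rintro _ ⟨x, u, t, hx, hu, hun, ht, rfl⟩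
  exact ⟨x, u, t, hx.trans hr, hu, hun.trans hr, Icc_subset_Icc_right hr ht, rfl⟩

theorem reachBound_nonneg (r : ℝ) : 0 ≤ S.reachBound r :=
  Real.sSup_nonneg <| by
    rintro _ ⟨x, u, t, -, -, -, -, rfl⟩
    exact norm_nonneg _

variable {S}

theorem BRS.bddAbove_reachNorms (h : S.BRS) (r : ℝ) : BddAbove (S.reachNorms r) := by
  obtain ⟨M, hM⟩ := h (max r 1) (by positivity) (max r 1) (by positivity)
  refine ⟨M, ?_⟩
  rintro _ ⟨x, u, t, hx, hu, hun, ht, rfl⟩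
  exact hM x (hx.trans (le_max_left _ _)) u hu (hun.trans (le_max_left _ _)) t
    (Icc_subset_Icc_right (le_max_left _ _) ht)

theorem BRS.monotone_reachBound (h : S.BRS) : Monotone S.reachBound := by
  intro r r' hr
  rcases (S.reachNorms r).eq_empty_or_nonempty with hempty | hne
  · simpa [reachBound, hempty] using S.reachBound_nonneg r'
  · exact csSup_le_csSup (h.bddAbove_reachNorms r') hne (S.reachNorms_mono hr)

theorem BRS.norm_phi_le_reachBound (h : S.BRS) {x : X} {u : ℝ → U} (hu : u ∈ S.inputs)
    {t : ℝ} (ht : 0 ≤ t) : ‖S.phi t x u‖ ≤ S.reachBound (max ‖x‖ (max (S.Unorm u) t)) :=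
  le_csSup (h.bddAbove_reachNorms _)
    ⟨x, u, t, le_max_left _ _, hu, (le_max_left _ _).trans (le_max_right _ _),
      ⟨ht, (le_max_right _ _).trans (le_max_right _ _)⟩, rfl⟩

theorem BRS.exists_continuous_monotone_bound (h : S.BRS) :
    ∃ μ : ℝ → ℝ → ℝ → ℝ, Continuous (fun p : ℝ × ℝ × ℝ => μ p.1 p.2.1 p.2.2) ∧
      (∀ r₁ r₂ r₃ R₁ R₂ R₃ : ℝ, r₁ ≤ R₁ → r₂ ≤ R₂ → r₃ ≤ R₃ → μ r₁ r₂ r₃ ≤ μ R₁ R₂ R₃) ∧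
      (∀ r₁ r₂ r₃ : ℝ, 0 ≤ μ r₁ r₂ r₃) ∧
      ∀ x : X, ∀ u ∈ S.inputs, ∀ t : ℝ, 0 ≤ t → ‖S.phi t x u‖ ≤ μ ‖x‖ (S.Unorm u) t := by
  obtain ⟨g, hg_cont, hg_mono, hg_ge⟩ := h.monotone_reachBound.exists_continuous_monotone_ge
  refine ⟨fun r₁ r₂ r₃ => g (max r₁ (max r₂ r₃)), by fun_prop, ?_, ?_, ?_⟩
  · intro r₁ r₂ r₃ R₁ R₂ R₃ h₁ h₂ h₃
    exact hg_mono (max_le_max h₁ (max_le_max h₂ h₃))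
  · exact fun _ _ _ => (S.reachBound_nonneg _).trans (hg_ge _)
  · exact fun x u hu t ht => (h.norm_phi_le_reachBound hu ht).trans (hg_ge _)

theorem BRS.of_continuousOn_bound (μ : ℝ → ℝ → ℝ → ℝ)
    (hμ : ContinuousOn (fun p : ℝ × ℝ × ℝ => μ p.1 p.2.1 p.2.2) (Ici 0 ×ˢ Ici 0 ×ˢ Ici 0))
    (hbound : ∀ x : X, ∀ u ∈ S.inputs, ∀ t : ℝ, 0 ≤ t → ‖S.phi t x u‖ ≤ μ ‖x‖ (S.Unorm u) t) :
    S.BRS := by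
  intro C _ τ _
  have hK : IsCompact (Icc (0:ℝ) C ×ˢ Icc (0:ℝ) C ×ˢ Icc (0:ℝ) τ) :=
    isCompact_Icc.prod (isCompact_Icc.prod isCompact_Icc)
  obtain ⟨M, hM⟩ := hK.exists_bound_of_continuousOn <| hμ.mono <|
    prod_mono Icc_subset_Ici_self (prod_mono Icc_subset_Ici_self Icc_subset_Ici_self)
  refine ⟨M, fun x hx u hu hun t ht => ?_⟩
  calc ‖S.phi t x u‖ ≤ μ ‖x‖ (S.Unorm u) t := hbound x u hu t ht.1
    _ ≤ M := (le_abs_self _).trans <|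
      hM (‖x‖, S.Unorm u, t) ⟨⟨norm_nonneg x, hx⟩, ⟨S.Unorm_nonneg u, hun⟩, ht⟩

/-- Characterization of the BRS property: BRS is equivalent to the existence of a
continuous increasing bound `μ(‖x‖,‖u‖,t)` for the flow, and also to the existence of a
merely continuous such bound. -/
theorem BRS_characterization (S : ControlSystem X U) :
    (S.BRS ↔ ∃ μ : ℝ → ℝ → ℝ → ℝ,
      ContinuousOn (fun p : ℝ × ℝ × ℝ => μ p.1 p.2.1 p.2.2)
        ((Ici 0) ×ˢ (Ici 0) ×ˢ (Ici 0)) ∧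
      (∀ r₁ r₂ r₃ R₁ R₂ R₃ : ℝ, 0 ≤ r₁ → 0 ≤ r₂ → 0 ≤ r₃ →
        r₁ ≤ R₁ → r₂ ≤ R₂ → r₃ ≤ R₃ → μ r₁ r₂ r₃ ≤ μ R₁ R₂ R₃) ∧
      (∀ r₁ r₂ r₃ : ℝ, 0 ≤ r₁ → 0 ≤ r₂ → 0 ≤ r₃ → 0 ≤ μ r₁ r₂ r₃) ∧
      ∀ x : X, ∀ u ∈ S.inputs, ∀ t : ℝ, 0 ≤ t →
        ‖S.phi t x u‖ ≤ μ ‖x‖ (S.Unorm u) t) ∧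
    (S.BRS ↔ ∃ μ : ℝ → ℝ → ℝ → ℝ,
      ContinuousOn (fun p : ℝ × ℝ × ℝ => μ p.1 p.2.1 p.2.2)
        ((Ici 0) ×ˢ (Ici 0) ×ˢ (Ici 0)) ∧
      (∀ r₁ r₂ r₃ : ℝ, 0 ≤ r₁ → 0 ≤ r₂ → 0 ≤ r₃ → 0 ≤ μ r₁ r₂ r₃) ∧
      ∀ x : X, ∀ u ∈ S.inputs, ∀ t : ℝ, 0 ≤ t →
        ‖S.phi t x u‖ ≤ μ ‖x‖ (S.Unorm u) t) := by
  refine ⟨⟨fun h => ?_, fun ⟨μ, hμ, _, _, hbound⟩ => BRS.of_continuousOn_bound μ hμ hbound⟩,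
    ⟨fun h => ?_, fun ⟨μ, hμ, _, hbound⟩ => BRS.of_continuousOn_bound μ hμ hbound⟩⟩ <;>
  obtain ⟨μ, hμ, hmono, hnonneg, hbound⟩ := h.exists_continuous_monotone_bound
  · exact ⟨μ, hμ.continuousOn, fun r₁ r₂ r₃ R₁ R₂ R₃ _ _ _ => hmono r₁ r₂ r₃ R₁ R₂ R₃,
      fun r₁ r₂ r₃ _ _ _ => hnonneg r₁ r₂ r₃, hbound⟩
  · exact ⟨μ, hμ.continuousOn, fun r₁ r₂ r₃ _ _ _ => hnonneg r₁ r₂ r₃, hbound⟩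

end ControlSystem
end

section
/- Consider the semilinear evolution equation ẋ(t)=Ax(t)+f(x(t),u(t)) on a Banach space X with mild solutions. If Assumption 1 holds and the system has bounded reachability sets (BRS), then the flow is continuous at the equilibrium (CEP): for every ε>0 and every h>0 there exists δ>0 such that t∈[0,h], ‖x‖_X≤δ and ‖u‖_𝒰≤δ imply ‖φ(t,x,u)‖_X ≤ ε. -/
open Set Filter

/-- A strongly continuous semigroup of bounded linear operators on `X`. -/
structure C0Semigroup (X : Type*) [NormedAddCommGroup X] [NormedSpace ℝ X] where
  /-- the semigroup operators -/
  T : ℝ → X →L[ℝ] X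
  map_zero' : T 0 = ContinuousLinearMap.id ℝ X
  semigroup' : ∀ s : ℝ, 0 ≤ s → ∀ t : ℝ, 0 ≤ t → T (s + t) = (T s).comp (T t)
  strong_cont : ∀ x : X, ContinuousOn (fun t => T t x) (Ici 0)

variable {X U : Type*} [NormedAddCommGroup X] [NormedSpace ℝ X] [CompleteSpace X]
  [NormedAddCommGroup U] [NormedSpace ℝ U]

/-- A member of `PC(ℝ₊, U)`: a globally bounded, piecewise continuous,
right-continuous input function (modelled on `ℝ`, only `t ≥ 0` relevant). -/
def PCin (u : ℝ → U) : Prop :=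
  (∃ C : ℝ, ∀ t : ℝ, 0 ≤ t → ‖u t‖ ≤ C) ∧
  (∀ t : ℝ, 0 ≤ t → ContinuousWithinAt u (Ici t) t) ∧
  (∀ T : ℝ, 0 < T → ∃ D : Finset ℝ, ∀ t ∈ Icc (0:ℝ) T, t ∉ D →
    ContinuousWithinAt u (Ici 0) t)

/-- The sup-norm of an input: `‖u‖_𝒰 = sup_{t ≥ 0} ‖u(t)‖`. -/
noncomputable def pcNorm (u : ℝ → U) : ℝ :=
  ⨆ t : Ici (0:ℝ), ‖u t.val‖

/-- The mild-solution property: `φ` assigns to each initial state and each admissible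
input the (unique, globally defined) mild solution of `ẋ = Ax + f(x,u)`, i.e.
`x(t) = T(t)x(0) + ∫₀ᵗ T(t-s) f(x(s), u(s)) ds`, which is continuous in time. -/
def IsMildFlow (Tg : C0Semigroup X) (f : X → U → X)
    (φ : ℝ → X → (ℝ → U) → X) : Prop :=
  ∀ (x : X) (u : ℝ → U), PCin u →
    (∀ t : ℝ, 0 ≤ t →
      φ t x u = Tg.T t x + ∫ s in (0:ℝ)..t, Tg.T (t - s) (f (φ s x u) (u s))) ∧
    ContinuousOn (fun t => φ t x u) (Ici 0)

/-- Assumption 1: `f` is Lipschitz continuous on bounded subsets of `X`, uniformly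
with respect to the second argument; `f(x,·)` is continuous and `f(0,0) = 0`. -/
def Assumption1 (f : X → U → X) : Prop :=
  (∀ C : ℝ, 0 < C → ∃ L : ℝ, 0 ≤ L ∧ ∀ x y : X, ‖x‖ ≤ C → ‖y‖ ≤ C → ∀ v : U,
    ‖f x v - f y v‖ ≤ L * ‖x - y‖) ∧
  (∀ x : X, Continuous (f x)) ∧ f 0 0 = 0

/-- Property `◊`: there exist `σ ∈ K` and `r > 0` such that
`‖f(x,v) - f(x,0)‖ ≤ σ(‖v‖)` for all `‖v‖ < r` and `‖x‖ ≤ r`. -/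
def PropertyDiamond (f : X → U → X) : Prop :=
  ∃ σ, ClassK σ ∧ ∃ r : ℝ, 0 < r ∧ ∀ v : U, ‖v‖ < r → ∀ x : X, ‖x‖ ≤ r →
    ‖f x v - f x 0‖ ≤ σ ‖v‖

/-- ISS of the system with flow `φ`. -/
def pISS (φ : ℝ → X → (ℝ → U) → X) : Prop :=
  ∃ β γ, ClassKL β ∧ ClassK γ ∧
    ∀ x : X, ∀ u : ℝ → U, PCin u → ∀ t : ℝ, 0 ≤ t →
      ‖φ t x u‖ ≤ β ‖x‖ t + γ (pcNorm u)

/-- UAG of the system with flow `φ`. -/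
def pUAG (φ : ℝ → X → (ℝ → U) → X) : Prop :=
  ∃ γ, ClassKinf0 γ ∧
    ∀ ε : ℝ, 0 < ε → ∀ r : ℝ, 0 < r → ∃ τ : ℝ, 0 ≤ τ ∧
      ∀ u : ℝ → U, PCin u → ∀ x : X, ‖x‖ < r → ∀ t : ℝ, τ ≤ t →
        ‖φ t x u‖ ≤ ε + γ (pcNorm u)

/-- BRS of the system with flow `φ`. -/
def pBRS (φ : ℝ → X → (ℝ → U) → X) : Prop :=
  ∀ C : ℝ, 0 < C → ∀ τ : ℝ, 0 < τ → ∃ M : ℝ,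
    ∀ x : X, ‖x‖ ≤ C → ∀ u : ℝ → U, PCin u → pcNorm u ≤ C → ∀ t ∈ Icc (0:ℝ) τ,
      ‖φ t x u‖ ≤ M

/-- ULIM of the system with flow `φ`. -/
def pULIM (φ : ℝ → X → (ℝ → U) → X) : Prop :=
  ∃ γ, ClassK0 γ ∧
    ∀ ε : ℝ, 0 < ε → ∀ r : ℝ, 0 < r → ∃ τ : ℝ, 0 ≤ τ ∧
      ∀ x : X, ‖x‖ ≤ r → ∀ u : ℝ → U, PCin u → ∃ t ∈ Icc (0:ℝ) τ,
        ‖φ t x u‖ ≤ ε + γ (pcNorm u)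

/-- ULS of the system with flow `φ`. -/
def pULS (φ : ℝ → X → (ℝ → U) → X) : Prop :=
  ∃ σ γ, ClassKinf σ ∧ ClassKinf0 γ ∧ ∃ r : ℝ, 0 < r ∧
    ∀ t : ℝ, 0 ≤ t → ∀ x : X, ‖x‖ ≤ r → ∀ u : ℝ → U, PCin u → pcNorm u ≤ r →
      ‖φ t x u‖ ≤ σ ‖x‖ + γ (pcNorm u)

/-- UGS of the system with flow `φ`. -/
def pUGS (φ : ℝ → X → (ℝ → U) → X) : Prop :=
  ∃ σ γ, ClassKinf σ ∧ ClassKinf0 γ ∧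
    ∀ t : ℝ, 0 ≤ t → ∀ x : X, ∀ u : ℝ → U, PCin u →
      ‖φ t x u‖ ≤ σ ‖x‖ + γ (pcNorm u)

/-- 0-ULS (uniform local stability of the undisturbed system) with flow `φ`. -/
def pZeroULS (φ : ℝ → X → (ℝ → U) → X) : Prop :=
  ∃ σ, ClassKinf σ ∧ ∃ r : ℝ, 0 < r ∧
    ∀ x : X, ‖x‖ ≤ r → ∀ t : ℝ, 0 ≤ t → ‖φ t x (fun _ => 0)‖ ≤ σ ‖x‖

/-!
Bounded reachability with radius `1` keeps every trajectory starting in the unit ball under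
inputs of norm at most `1` inside a fixed ball of radius `R` on `[0, h]`, where `f` is
Lipschitz with some constant `L`. Since `f (0, ·)` is continuous with `f (0, 0) = 0`, inputs of
small norm give `‖f (x, v)‖ ≤ L ‖x‖ + κ` on that ball. With `‖T t‖ ≤ M` on `[0, h]` the
variation-of-constants formula yields `‖φ t‖ ≤ M (‖x‖ + κ h) + M L ∫₀ᵗ ‖φ s‖ ds`, and Grönwall's
inequality bounds `‖φ t‖` by `M (‖x‖ + κ h) e^{M L h}`, which is small when `‖x‖` and `κ` are.
-/

theorem le_mul_exp_of_le_add_mul_integral {ψ : ℝ → ℝ} (hψ : Continuous ψ) {a K h : ℝ}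
    (hK : 0 ≤ K) (hb : ∀ t ∈ Icc 0 h, ψ t ≤ a + K * ∫ s in (0 : ℝ)..t, ψ s) :
    ∀ t ∈ Icc 0 h, ψ t ≤ a * Real.exp (K * t) := by
  set G : ℝ → ℝ := fun t => ∫ s in (0 : ℝ)..t, ψ s
  have hG : ∀ t, HasDerivAt G (ψ t) t := fun t =>
    (hψ.integral_hasStrictDerivAt 0 t).hasDerivAt
  have hGc : Continuous G := continuous_iff_continuousAt.2 fun t => (hG t).continuousAt
  have hGb : ∀ t ∈ Icc 0 h, G t ≤ gronwallBound 0 K a t := by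
    simpa using le_gronwallBound_of_liminf_deriv_right_le (a := 0) (b := h) (δ := 0) (K := K)
      (ε := a) hGc.continuousOn
      (fun t _ _ hr => (hG t).hasDerivWithinAt.liminf_right_slope_le hr) (by simp [G])
      fun t ht => by linarith [hb t (Ico_subset_Icc_self ht)]
  have hbound : ∀ t, a + K * gronwallBound 0 K a t = a * Real.exp (K * t) := by
    intro t
    rcases eq_or_ne K 0 with rfl | hK0
    · simp
    · rw [gronwallBound_of_K_ne_0 hK0]
      field_simp
      ring
  intro t ht
  calc ψ t ≤ a + K * G t := hb t ht
    _ ≤ a + K * gronwallBound 0 K a t := by gcongr; exact hGb t ht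
    _ = a * Real.exp (K * t) := hbound t

theorem IsCompact.exists_norm_le_of_continuousOn_apply {E : Type*} [NormedAddCommGroup E]
    [NormedSpace ℝ E] [CompleteSpace E] {T : ℝ → E →L[ℝ] E} {s : Set ℝ} (hs : IsCompact s)
    (hT : ∀ x, ContinuousOn (fun t => T t x) s) : ∃ M, 0 < M ∧ ∀ t ∈ s, ‖T t‖ ≤ M := by
  obtain ⟨M, hM⟩ := banach_steinhaus (g := fun t : s => T t) fun x => by
    obtain ⟨C, hC⟩ := hs.exists_bound_of_continuousOn (hT x)
    exact ⟨C, fun t => hC t t.2⟩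
  exact ⟨max M 1, by positivity, fun t ht => (hM ⟨t, ht⟩).trans (le_max_left _ _)⟩

theorem norm_le_pcNorm {V : Type*} [NormedAddCommGroup V] {u : ℝ → V}
    (hu : ∃ C : ℝ, ∀ t : ℝ, 0 ≤ t → ‖u t‖ ≤ C) {s : ℝ} (hs : 0 ≤ s) : ‖u s‖ ≤ pcNorm u := by
  obtain ⟨C, hC⟩ := hu
  exact le_ciSup (f := fun t : Ici (0 : ℝ) => ‖u t.val‖)
    ⟨C, by rintro _ ⟨t, rfl⟩; exact hC t t.2⟩ ⟨s, hs⟩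

theorem Assumption1.exists_norm_le {E V : Type*} [NormedAddCommGroup E] [NormedAddCommGroup V]
    {f : E → V → E} (hf : Assumption1 f) (R : ℝ) :
    ∃ L, 0 ≤ L ∧ ∀ κ, 0 < κ → ∃ δ, 0 < δ ∧
      ∀ x v, ‖x‖ ≤ R → ‖v‖ ≤ δ → ‖f x v‖ ≤ L * ‖x‖ + κ := by
  obtain ⟨L, hL, hLip⟩ := hf.1 (max R 1) (lt_max_of_lt_right one_pos)
  refine ⟨L, hL, fun κ hκ => ?_⟩
  obtain ⟨δ, hδ, hf0⟩ := Metric.continuousAt_iff.1 (hf.2.1 0).continuousAt κ hκ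
  refine ⟨δ / 2, half_pos hδ, fun x v hx hv => ?_⟩
  have hfx : ‖f x v - f 0 v‖ ≤ L * ‖x‖ := by
    simpa using hLip x 0 (hx.trans (le_max_left _ _))
      (norm_zero.trans_le (zero_le_one.trans (le_max_right _ _))) v
  have hfv : ‖f 0 v‖ ≤ κ := by
    have := hf0 (x := v) (by rw [dist_zero_right]; linarith)
    rw [hf.2.2, dist_zero_right] at this
    exact this.le
  calc ‖f x v‖ ≤ ‖f x v - f 0 v‖ + ‖f 0 v‖ := norm_le_norm_sub_add _ _
    _ ≤ L * ‖x‖ + κ := add_le_add hfx hfv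

theorem norm_le_mul_exp_of_eq_add_integral {E : Type*} [NormedAddCommGroup E]
    [NormedSpace ℝ E] {T : ℝ → E →L[ℝ] E} {ξ g : ℝ → E} {x : E} {M L κ h : ℝ}
    (hM : 0 ≤ M) (hL : 0 ≤ L) (hκ : 0 ≤ κ) (hT : ∀ r ∈ Icc 0 h, ‖T r‖ ≤ M)
    (hξ : ContinuousOn ξ (Ici 0))
    (hmild : ∀ t ∈ Icc 0 h, ξ t = T t x + ∫ s in (0 : ℝ)..t, T (t - s) (g s))
    (hg : ∀ s ∈ Icc 0 h, ‖g s‖ ≤ L * ‖ξ s‖ + κ) :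
    ∀ t ∈ Icc 0 h, ‖ξ t‖ ≤ M * (‖x‖ + κ * h) * Real.exp (M * L * t) := by
  set ψ : ℝ → ℝ := fun s => ‖ξ (max s 0)‖
  have hψ : Continuous ψ :=
    (hξ.comp_continuous (continuous_id.max continuous_const) fun s => le_max_right s 0).norm
  have hψξ : ∀ s, 0 ≤ s → ψ s = ‖ξ s‖ := fun s hs => by simp [ψ, max_eq_left hs]
  have hint : ∀ t ∈ Icc 0 h, ‖∫ s in (0 : ℝ)..t, T (t - s) (g s)‖
      ≤ M * L * (∫ s in (0 : ℝ)..t, ψ s) + M * κ * t := by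
    intro t ht
    have hbound : ∀ s ∈ Ioc 0 t, ‖T (t - s) (g s)‖ ≤ M * L * ψ s + M * κ := by
      intro s hs
      have hs' : s ∈ Icc 0 h := ⟨hs.1.le, hs.2.trans ht.2⟩
      calc ‖T (t - s) (g s)‖ ≤ M * ‖g s‖ :=
            (T _).le_of_opNorm_le (hT _ ⟨by linarith [hs.2], by linarith [hs.1, ht.2]⟩) _
        _ ≤ M * (L * ψ s + κ) := by rw [hψξ s hs'.1]; gcongr; exact hg s hs'
        _ = M * L * ψ s + M * κ := by ring
    calc ‖∫ s in (0 : ℝ)..t, T (t - s) (g s)‖ ≤ ∫ s in (0 : ℝ)..t, (M * L * ψ s + M * κ) :=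
          intervalIntegral.norm_integral_le_of_norm_le ht.1 (Eventually.of_forall hbound)
            (Continuous.intervalIntegrable (by fun_prop) 0 t)
      _ = M * L * (∫ s in (0 : ℝ)..t, ψ s) + M * κ * t := by
          rw [intervalIntegral.integral_add
            ((hψ.const_mul (M * L)).intervalIntegrable 0 t) intervalIntegrable_const,
            intervalIntegral.integral_const_mul,
            intervalIntegral.integral_const, smul_eq_mul]
          ring
  intro t ht
  rw [← hψξ t ht.1]
  refine le_mul_exp_of_le_add_mul_integral hψ (mul_nonneg hM hL) (fun τ hτ => ?_) t ht
  calc ψ τ = ‖T τ x + ∫ s in (0 : ℝ)..τ, T (τ - s) (g s)‖ := by rw [hψξ τ hτ.1, hmild τ hτ]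
    _ ≤ M * ‖x‖ + (M * L * (∫ s in (0 : ℝ)..τ, ψ s) + M * κ * τ) :=
        norm_add_le_of_le ((T τ).le_of_opNorm_le (hT τ hτ) x) (hint τ hτ)
    _ ≤ M * (‖x‖ + κ * h) + M * L * ∫ s in (0 : ℝ)..τ, ψ s := by
        nlinarith [mul_le_mul_of_nonneg_left hτ.2 (mul_nonneg hM hκ)]

/-- If Assumption 1 holds and the semilinear evolution equation is BRS, then the flow is
continuous at the equilibrium (CEP). -/
theorem evolution_flow_CEP
    (Tg : C0Semigroup X) (f : X → U → X) (hA1 : Assumption1 f)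
    (φ : ℝ → X → (ℝ → U) → X) (hφ : IsMildFlow Tg f φ)
    (hBRS : pBRS φ) :
    ∀ ε : ℝ, 0 < ε → ∀ h : ℝ, 0 < h → ∃ δ : ℝ, 0 < δ ∧
      ∀ t ∈ Icc (0:ℝ) h, ∀ x : X, ‖x‖ ≤ δ → ∀ u : ℝ → U, PCin u → pcNorm u ≤ δ →
        ‖φ t x u‖ ≤ ε := by
  intro ε hε h hh
  obtain ⟨M, hM, hT⟩ := isCompact_Icc.exists_norm_le_of_continuousOn_apply
    fun x => (Tg.strong_cont x).mono (Icc_subset_Ici_self : Icc 0 h ⊆ Ici 0)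
  obtain ⟨R, hR⟩ := hBRS 1 one_pos h hh
  obtain ⟨L, hL, hf⟩ := hA1.exists_norm_le R
  set η := ε / (M * (1 + h) * Real.exp (M * L * h))
  have hη : 0 < η := by positivity
  obtain ⟨δ, hδ, hfδ⟩ := hf η hη
  refine ⟨min (min 1 δ) η, by positivity, fun t ht x hx u hu hun => ?_⟩
  simp only [le_min_iff] at hx hun
  have hg : ∀ s ∈ Icc 0 h, ‖f (φ s x u) (u s)‖ ≤ L * ‖φ s x u‖ + η := fun s hs =>
    hfδ _ _ (hR x hx.1.1 u hu hun.1.1 s hs) ((norm_le_pcNorm hu.1 hs.1).trans hun.1.2)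
  calc ‖φ t x u‖ ≤ M * (‖x‖ + η * h) * Real.exp (M * L * t) :=
        norm_le_mul_exp_of_eq_add_integral hM.le hL hη.le hT (hφ x u hu).2
          (fun s hs => (hφ x u hu).1 s hs.1) hg t ht
    _ ≤ M * (η + η * h) * Real.exp (M * L * h) := by gcongr; exacts [hx.2, ht.2]
    _ = ε := by simp only [η]; field_simp
end
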